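/- arXiv:2110.15596 — 7 statements merged into one kernel-verified Lean document; each statement's English description precedes it below -/
import Mathlib

section
/- For each m ∈ ℕ*, let x^m and w^m be independent random vectors in ℝ^m such that (1/m)‖x^m‖² → σ∞² almost surely as m → ∞ (for some constant σ∞² ≥ 0), and the coordinates w^m_j, j = 1,…,m, are i.i.d. Gaussian N(0, 1/m). Then the real random variables (w^m)ᵀ x^m converge in distribution, as m → ∞, to the Gaussian law N(0, σ∞²). -/
open MeasureTheory ProbabilityTheory Filter
open Real
open scoped ENNReal NNReal

lemma aux_pdf_conv (v₁ v₂ : NNReal) (h₁ : v₁ ≠ 0) (h₂ : v₂ ≠ 0) (z : ℝ) :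
    ∫ x, gaussianPDFReal 0 v₁ x * gaussianPDFReal 0 v₂ (z - x)
      = gaussianPDFReal 0 (v₁ + v₂) z := by
  have ha : (0:ℝ) < v₁ := lt_of_le_of_ne v₁.2 (by exact_mod_cast (Ne.symm h₁))
  have hb : (0:ℝ) < v₂ := lt_of_le_of_ne v₂.2 (by exact_mod_cast (Ne.symm h₂))
  set a : ℝ := (v₁ : ℝ) with ha_def
  set b : ℝ := (v₂ : ℝ) with hb_def
  have hab : (0:ℝ) < a + b := by positivity
  set k : ℝ := (a + b) / (2 * a * b) with hk_def
  have hk : 0 < k := by positivity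
  set c : ℝ := a * z / (a + b) with hc_def
  set d : ℝ := -z ^ 2 / (2 * (a + b)) with hd_def
  have key : ∀ x : ℝ, (-(x - 0) ^ 2 / (2 * a)) + (-(z - x - 0) ^ 2 / (2 * b))
      = -(k * (x - c) ^ 2) + d := by
    intro x
    rw [hk_def, hc_def, hd_def]
    field_simp
    ring
  have hfun : ∀ x : ℝ, gaussianPDFReal 0 v₁ x * gaussianPDFReal 0 v₂ (z - x)
      = ((√(2 * π * a))⁻¹ * (√(2 * π * b))⁻¹ * Real.exp d) * Real.exp (-(k * (x - c) ^ 2)) := by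
    intro x
    simp only [gaussianPDFReal]
    rw [← ha_def, ← hb_def]
    rw [show (√(2*π*a))⁻¹ * rexp (-(x - 0)^2 / (2*a)) * ((√(2*π*b))⁻¹ * rexp (-(z - x - 0)^2 / (2*b)))
      = (√(2*π*a))⁻¹ * (√(2*π*b))⁻¹ * (rexp (-(x - 0)^2 / (2*a)) * rexp (-(z - x - 0)^2 / (2*b))) by ring]
    rw [← Real.exp_add, key x, Real.exp_add]
    ring
  rw [integral_congr_ae (Filter.Eventually.of_forall hfun)]
  rw [integral_const_mul]
  have hshift : ∫ x : ℝ, Real.exp (-(k * (x - c) ^ 2)) = ∫ x : ℝ, Real.exp (-(k * x ^ 2)) :=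
    integral_sub_right_eq_self (fun u => Real.exp (-(k * u ^ 2))) c
  rw [hshift]
  have hgauss : ∫ x : ℝ, Real.exp (-(k * x ^ 2)) = √(π / k) := by
    simpa using integral_gaussian k
  rw [hgauss]
  -- now the constants
  have hconst : (√(2 * π * a))⁻¹ * (√(2 * π * b))⁻¹ * √(π / k) = (√(2 * π * (a + b)))⁻¹ := by
    have h1 : π / k = (2 * π * a) * (2 * π * b) / (2 * π * (a + b)) := by
      rw [hk_def]; field_simp
    have s1 : (0:ℝ) < 2 * π * a := by positivity
    have s2 : (0:ℝ) < 2 * π * b := by positivity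
    have s3 : (0:ℝ) < 2 * π * (a + b) := by positivity
    rw [h1, Real.sqrt_div (by positivity), Real.sqrt_mul (le_of_lt s1)]
    have h4 : √(2 * π * a) ≠ 0 := by positivity
    have h5 : √(2 * π * b) ≠ 0 := by positivity
    have h6 : √(2 * π * (a + b)) ≠ 0 := by positivity
    field_simp
  rw [show ∀ (A B C D : ℝ), A⁻¹ * B⁻¹ * C * D = (A⁻¹ * B⁻¹ * D) * C from fun A B C D => by ring]
  rw [hconst]
  simp only [gaussianPDFReal, NNReal.coe_add, ← ha_def, ← hb_def]
  rw [hd_def]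
  ring_nf

lemma aux_pdfReal_le (v : NNReal) (x : ℝ) :
    ‖gaussianPDFReal 0 v x‖ ≤ (√(2 * π * v))⁻¹ := by
  rw [Real.norm_of_nonneg (gaussianPDFReal_nonneg _ _ _)]
  unfold gaussianPDFReal
  have h1 : rexp (-(x - 0) ^ 2 / (2 * v)) ≤ 1 := by
    rw [Real.exp_le_one_iff]
    apply div_nonpos_of_nonpos_of_nonneg
    · simp [sq_nonneg]
    · positivity
  calc (√(2 * π * v))⁻¹ * rexp (-(x - 0) ^ 2 / (2 * ↑v))
      ≤ (√(2 * π * v))⁻¹ * 1 := by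
        apply mul_le_mul_of_nonneg_left h1 (by positivity)
    _ = (√(2 * π * v))⁻¹ := mul_one _

lemma aux_integrable_prod (v₁ v₂ : NNReal) (u : ℝ) :
    Integrable (fun x => gaussianPDFReal 0 v₁ x * gaussianPDFReal 0 v₂ (u - x)) := by
  apply Integrable.bdd_mul
  · exact (integrable_gaussianPDFReal 0 v₂).comp_sub_left u
  · exact (measurable_gaussianPDFReal 0 v₁).aestronglyMeasurable
  · exact Filter.Eventually.of_forall (aux_pdfReal_le v₁)

lemma aux_gaussian_conv (v₁ v₂ : NNReal) :
    Measure.conv (gaussianReal 0 v₁) (gaussianReal 0 v₂) = gaussianReal 0 (v₁ + v₂) := by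
  by_cases h₁ : v₁ = 0
  · subst h₁
    rw [gaussianReal_zero_var, zero_add]
    exact Measure.dirac_zero_conv _
  by_cases h₂ : v₂ = 0
  · subst h₂
    rw [gaussianReal_zero_var, add_zero]
    rw [Measure.conv_comm]
    exact Measure.dirac_zero_conv _
  have hne : v₁ + v₂ ≠ 0 := by positivity
  rw [gaussianReal_of_var_ne_zero _ h₁, gaussianReal_of_var_ne_zero _ h₂,
    gaussianReal_of_var_ne_zero _ hne]
  set g₁ := gaussianPDF 0 v₁
  set g₂ := gaussianPDF 0 v₂
  have hm₁ : Measurable g₁ := measurable_gaussianPDF 0 v₁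
  have hm₂ : Measurable g₂ := measurable_gaussianPDF 0 v₂
  ext s hs
  set I : ℝ → ℝ≥0∞ := s.indicator 1 with hI_def
  have hI : Measurable I := measurable_one.indicator hs
  rw [show Measure.conv (volume.withDensity g₁) (volume.withDensity g₂)
      = Measure.map (fun p : ℝ × ℝ => p.1 + p.2)
          ((volume.withDensity g₁).prod (volume.withDensity g₂)) from rfl]
  rw [Measure.map_apply measurable_add hs,
    Measure.prod_apply (measurable_add hs)]
  have hpre : ∀ x : ℝ, Prod.mk x ⁻¹' ((fun p : ℝ × ℝ => p.1 + p.2) ⁻¹' s)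
      = (fun y => x + y) ⁻¹' s := fun x => rfl
  have step1 : ∀ x : ℝ, (volume.withDensity g₂) ((fun y => x + y) ⁻¹' s)
      = ∫⁻ u, I u * g₂ (u - x) := by
    intro x
    rw [withDensity_apply _ ((measurable_const_add x) hs)]
    rw [← lintegral_indicator ((measurable_const_add x) hs) _]
    have : ∀ y : ℝ, ((fun y => x + y) ⁻¹' s).indicator g₂ y
        = (fun u => I u * g₂ (u - x)) (y + x) := by
      intro y
      by_cases hy : x + y ∈ s
      · rw [Set.indicator_of_mem (show y ∈ (fun y => x + y) ⁻¹' s from hy) g₂]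
        have hy' : y + x ∈ s := by rwa [add_comm]
        simp [hI_def, Set.indicator_of_mem hy', add_sub_cancel_right]
      · rw [Set.indicator_of_notMem (show y ∉ (fun y => x + y) ⁻¹' s from hy) g₂]
        have hy' : y + x ∉ s := by rwa [add_comm]
        simp [hI_def, Set.indicator_of_notMem hy']
    rw [lintegral_congr this]
    exact lintegral_add_right_eq_self (fun u => I u * g₂ (u - x)) x
  simp_rw [hpre, step1]
  have hmeas_inner : Measurable (Function.uncurry fun x u => I u * g₂ (u - x)) :=
    (hI.comp measurable_snd).mul (hm₂.comp (measurable_snd.sub measurable_fst))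
  rw [lintegral_withDensity_eq_lintegral_mul _ hm₁ hmeas_inner.lintegral_prod_right]
  simp only [Pi.mul_apply]
  have hswap : ∫⁻ x, g₁ x * ∫⁻ u, I u * g₂ (u - x)
      = ∫⁻ u, I u * ∫⁻ x, g₁ x * g₂ (u - x) := by
    calc ∫⁻ x, g₁ x * ∫⁻ u, I u * g₂ (u - x)
        = ∫⁻ x, ∫⁻ u, g₁ x * (I u * g₂ (u - x)) := by
          congr 1; ext x
          rw [lintegral_const_mul (f := fun u : ℝ => I u * g₂ (u - x)) _ ((hI.mul (hm₂.comp (measurable_sub_const x))) : Measurable fun u : ℝ => I u * g₂ (u - x))]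
      _ = ∫⁻ u, ∫⁻ x, g₁ x * (I u * g₂ (u - x)) := by
          apply lintegral_lintegral_swap
          exact ((hm₁.comp measurable_fst).mul ((hI.comp measurable_snd).mul
            (hm₂.comp (measurable_snd.sub measurable_fst)))).aemeasurable
      _ = ∫⁻ u, I u * ∫⁻ x, g₁ x * g₂ (u - x) := by
          congr 1; ext u
          rw [← lintegral_const_mul (f := fun x : ℝ => g₁ x * g₂ (u - x)) _ ((hm₁.mul (hm₂.comp (measurable_const_sub u))) : Measurable fun x : ℝ => g₁ x * g₂ (u - x))]
          congr 1; ext x; ring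
  rw [hswap]
  have hinner : ∀ u : ℝ, ∫⁻ x, g₁ x * g₂ (u - x) = gaussianPDF 0 (v₁ + v₂) u := by
    intro u
    have : ∀ x : ℝ, g₁ x * g₂ (u - x)
        = ENNReal.ofReal (gaussianPDFReal 0 v₁ x * gaussianPDFReal 0 v₂ (u - x)) := by
      intro x
      rw [ENNReal.ofReal_mul (gaussianPDFReal_nonneg _ _ _)]
      rfl
    simp_rw [this]
    rw [← ofReal_integral_eq_lintegral_ofReal (aux_integrable_prod v₁ v₂ u)
      (Filter.Eventually.of_forall fun x =>
        mul_nonneg (gaussianPDFReal_nonneg _ _ _) (gaussianPDFReal_nonneg _ _ _))]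
    rw [aux_pdf_conv v₁ v₂ h₁ h₂ u]
    rfl
  simp_rw [hinner]
  rw [withDensity_apply _ hs, ← lintegral_indicator hs _]
  congr 1; ext u
  by_cases hu : u ∈ s
  · simp [hI_def, Set.indicator_of_mem hu]
  · simp [hI_def, Set.indicator_of_notMem hu]

lemma aux_indep_add {Ω : Type*} [MeasurableSpace Ω] {μ : Measure Ω} [IsProbabilityMeasure μ]
    {X Y : Ω → ℝ} (hX : Measurable X) (hY : Measurable Y) (h : IndepFun X Y μ)
    {v₁ v₂ : NNReal} (h1 : μ.map X = gaussianReal 0 v₁) (h2 : μ.map Y = gaussianReal 0 v₂) :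
    μ.map (X + Y) = gaussianReal 0 (v₁ + v₂) := by
  have hpair : μ.map (fun ω => (X ω, Y ω)) = (μ.map X).prod (μ.map Y) :=
    (indepFun_iff_map_prod_eq_prod_map_map hX.aemeasurable hY.aemeasurable).mp h
  have : μ.map (X + Y)
      = Measure.map (fun p : ℝ × ℝ => p.1 + p.2) (μ.map (fun ω => (X ω, Y ω))) := by
    rw [Measure.map_map measurable_add (hX.prodMk hY)]
    rfl
  rw [this, hpair, h1, h2]
  exact aux_gaussian_conv v₁ v₂

lemma aux_map_sum {Ω : Type*} [MeasurableSpace Ω] {μ : Measure Ω} [IsProbabilityMeasure μ]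
    {n : ℕ} (Y : Fin n → Ω → ℝ) (hmeas : ∀ i, Measurable (Y i))
    (hind : iIndepFun Y μ)
    (v : Fin n → NNReal) (hY : ∀ i, μ.map (Y i) = gaussianReal 0 (v i)) :
    μ.map (fun ω => ∑ i, Y i ω) = gaussianReal 0 (∑ i, v i) := by
  classical
  have main : ∀ s : Finset (Fin n),
      μ.map (fun ω => ∑ i ∈ s, Y i ω) = gaussianReal 0 (∑ i ∈ s, v i) := by
    intro s
    induction s using Finset.induction_on with
    | empty =>
        simp only [Finset.sum_empty]
        rw [gaussianReal_zero_var]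
        have : (fun _ : Ω => (0:ℝ)) = fun _ => (0:ℝ) := rfl
        rw [Measure.map_const]
        simp
    | insert i s hi ih =>
        have hindep' : IndepFun (∑ j ∈ s, Y j) (Y i) μ :=
          hind.indepFun_finset_sum_of_notMem hmeas hi
        have hsum_meas : Measurable (∑ j ∈ s, Y j) := by
          rw [show (∑ j ∈ s, Y j) = fun ω => ∑ j ∈ s, Y j ω from funext fun ω => Finset.sum_apply ω s Y]
          exact Finset.measurable_sum s fun j _ => hmeas j
        have hmap_sum : μ.map (∑ j ∈ s, Y j) = gaussianReal 0 (∑ j ∈ s, v j) := by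
          have : (∑ j ∈ s, Y j) = fun ω => ∑ j ∈ s, Y j ω := by
            ext ω; simp [Finset.sum_apply]
          rw [this, ih]
        have := aux_indep_add hsum_meas (hmeas i) hindep' hmap_sum (hY i)
        have heq : (fun ω => ∑ j ∈ insert i s, Y j ω) = (∑ j ∈ s, Y j) + Y i := by
          ext ω
          rw [Finset.sum_insert hi]
          simp [Finset.sum_apply]
          ring
        rw [Finset.sum_insert hi, heq, this, add_comm (v i)]
  exact main Finset.univ

lemma aux_G_eq (f : BoundedContinuousFunction ℝ ℝ) (v : NNReal) :
    ∫ z, f z ∂(gaussianReal 0 v) = ∫ z, f (Real.sqrt (v : ℝ) * z) ∂(gaussianReal 0 1) := by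
  have hmap : (gaussianReal 0 1).map (fun z => Real.sqrt (v : ℝ) * z) = gaussianReal 0 v := by
    rw [gaussianReal_map_const_mul (Real.sqrt (v : ℝ))]
    congr 1
    · simp
    · ext
      simp [Real.sq_sqrt v.2]
  rw [← hmap, integral_map (measurable_const_mul _).aemeasurable
    f.continuous.aestronglyMeasurable]

lemma aux_G_cont (f : BoundedContinuousFunction ℝ ℝ) :
    Continuous fun v : ℝ => ∫ z, f (Real.sqrt v * z) ∂(gaussianReal 0 1) := by
  apply continuous_of_dominated (bound := fun _ => ‖f‖)
  · exact fun v => (f.continuous.comp (continuous_const.mul continuous_id)).aestronglyMeasurable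
  · exact fun v => Filter.Eventually.of_forall fun z => f.norm_coe_le_norm _
  · exact integrable_const _
  · exact Filter.Eventually.of_forall fun z =>
      f.continuous.comp (Real.continuous_sqrt.mul continuous_const)

lemma aux_G_bound (f : BoundedContinuousFunction ℝ ℝ) (v : ℝ) :
    ‖∫ z, f (Real.sqrt v * z) ∂(gaussianReal 0 1)‖ ≤ ‖f‖ := by
  calc ‖∫ z, f (Real.sqrt v * z) ∂(gaussianReal 0 1)‖
      ≤ ∫ _, ‖f‖ ∂(gaussianReal 0 1) :=
        norm_integral_le_of_norm_le (integrable_const _)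
          (Filter.Eventually.of_forall fun z => f.norm_coe_le_norm _)
    _ = ‖f‖ := by simp

/-- If for each `m`, `x^m` and `w^m` are independent random vectors in `ℝ^m`
with `(1/m)‖x^m‖² → σ∞²` a.s. and the coordinates of `w^m` i.i.d. `N(0, 1/m)`, then
`(w^m)ᵀ x^m` converges in distribution to `N(0, σ∞²)` (weak convergence tested against
bounded continuous functions). -/
theorem stmt_1 {Ω : Type*} [MeasurableSpace Ω] (μ : Measure Ω) [IsProbabilityMeasure μ]
    (x w : (m : ℕ) → Ω → (Fin m → ℝ))
    (hxmeas : ∀ m, Measurable (x m)) (hwmeas : ∀ m, Measurable (w m))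
    (hindep : ∀ m, IndepFun (x m) (w m) μ)
    (hwlaw : ∀ m, ∀ j : Fin m,
      Measure.map (fun ω => w m ω j) μ = gaussianReal 0 ((m : NNReal))⁻¹)
    (hwiid : ∀ m, iIndepFun
      (fun (j : Fin m) (ω : Ω) => w m ω j) μ)
    (σsq : NNReal)
    (hx : ∀ᵐ ω ∂μ, Tendsto (fun m : ℕ => (1 / (m : ℝ)) * ∑ j, (x m ω j) ^ 2)
      atTop (nhds (σsq : ℝ))) :
    ∀ f : BoundedContinuousFunction ℝ ℝ,
      Tendsto (fun m : ℕ => ∫ ω, f (∑ j, w m ω j * x m ω j) ∂μ) atTop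
        (nhds (∫ z, f z ∂(gaussianReal 0 σsq))) := by
  intro f
  set G : ℝ → ℝ := fun v => ∫ z, f (Real.sqrt v * z) ∂(gaussianReal 0 1) with hG_def
  have hGcont : Continuous G := aux_G_cont f
  -- the per-m variance functions
  set S : ℕ → Ω → ℝ := fun m ω => (1 / (m : ℝ)) * ∑ j, (x m ω j) ^ 2 with hS_def
  have hSmeas : ∀ m, Measurable (S m) := by
    intro m
    apply Measurable.const_mul
    exact Finset.measurable_sum _ fun j _ => ((measurable_pi_apply j).comp (hxmeas m)).pow_const 2
  -- Step A: law of the linear combination of the w's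
  have hlawsum : ∀ m (a : Fin m → ℝ),
      μ.map (fun ω => ∑ j, w m ω j * a j)
        = gaussianReal 0 (∑ j, (Real.nnabs (a j) ^ 2 * ((m : ℝ≥0))⁻¹)) := by
    intro m a
    apply aux_map_sum (Y := fun j ω => w m ω j * a j)
    · exact fun j => ((measurable_pi_apply j).comp (hwmeas m)).mul_const _
    · exact (hwiid m).comp (fun j r => r * a j) (fun j => measurable_mul_const _)
    · intro j
      have h1 : Measurable fun ω => w m ω j := (measurable_pi_apply j).comp (hwmeas m)
      have : μ.map (fun ω => w m ω j * a j)
          = (μ.map (fun ω => w m ω j)).map (· * a j) := by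
        rw [Measure.map_map (measurable_mul_const (a j)) h1]
        rfl
      rw [this, hwlaw m j, gaussianReal_map_mul_const (a j)]
      congr 1
      · ring
      · congr 1
        ext
        simp [sq_abs]
  -- the NNReal-to-real coercion identity
  have hcoe : ∀ m (a : Fin m → ℝ),
      ((∑ j, (Real.nnabs (a j) ^ 2 * ((m : ℝ≥0))⁻¹) : ℝ≥0) : ℝ)
        = (1 / (m : ℝ)) * ∑ j, (a j) ^ 2 := by
    intro m a
    rw [NNReal.coe_sum]
    simp only [NNReal.coe_mul, NNReal.coe_inv, NNReal.coe_pow, Real.coe_nnabs, sq_abs,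
      NNReal.coe_natCast]
    rw [← Finset.sum_mul]
    ring
  -- Step B/C: the per-m identity
  have key : ∀ m : ℕ, ∫ ω, f (∑ j, w m ω j * x m ω j) ∂μ = ∫ ω, G (S m ω) ∂μ := by
    intro m
    haveI : IsProbabilityMeasure (μ.map (x m)) :=
      Measure.isProbabilityMeasure_map (hxmeas m).aemeasurable
    haveI : IsProbabilityMeasure (μ.map (w m)) :=
      Measure.isProbabilityMeasure_map (hwmeas m).aemeasurable
    have hTcont : Continuous fun p : (Fin m → ℝ) × (Fin m → ℝ) => ∑ j, p.2 j * p.1 j :=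
      continuous_finset_sum _ fun j _ =>
        ((continuous_apply j).comp continuous_snd).mul ((continuous_apply j).comp continuous_fst)
    have hpair : μ.map (fun ω => (x m ω, w m ω)) = (μ.map (x m)).prod (μ.map (w m)) :=
      (indepFun_iff_map_prod_eq_prod_map_map (hxmeas m).aemeasurable
        (hwmeas m).aemeasurable).mp (hindep m)
    have h1 : ∫ ω, f (∑ j, w m ω j * x m ω j) ∂μ
        = ∫ p : (Fin m → ℝ) × (Fin m → ℝ), f (∑ j, p.2 j * p.1 j)
            ∂((μ.map (x m)).prod (μ.map (w m))) := by
      rw [← hpair]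
      exact (integral_map ((hxmeas m).prodMk (hwmeas m)).aemeasurable
        (f.continuous.comp hTcont).aestronglyMeasurable).symm
    have hInt : Integrable (fun p : (Fin m → ℝ) × (Fin m → ℝ) => f (∑ j, p.2 j * p.1 j))
        ((μ.map (x m)).prod (μ.map (w m))) :=
      (f.compContinuous ⟨fun p : (Fin m → ℝ) × (Fin m → ℝ) => ∑ j, p.2 j * p.1 j,
        hTcont⟩).integrable _
    have h2 : ∫ p : (Fin m → ℝ) × (Fin m → ℝ), f (∑ j, p.2 j * p.1 j)
          ∂((μ.map (x m)).prod (μ.map (w m)))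
        = ∫ a, (∫ b, f (∑ j, b j * a j) ∂(μ.map (w m))) ∂(μ.map (x m)) :=
      integral_prod _ hInt
    have h3 : ∀ a : Fin m → ℝ,
        ∫ b, f (∑ j, b j * a j) ∂(μ.map (w m)) = G ((1 / (m : ℝ)) * ∑ j, (a j) ^ 2) := by
      intro a
      have hsm : Continuous fun b : Fin m → ℝ => ∑ j, b j * a j :=
        continuous_finset_sum _ fun j _ => (continuous_apply j).mul continuous_const
      have hmeas2 : Measurable fun ω => ∑ j, w m ω j * a j :=
        Finset.measurable_sum _ fun j _ =>
          ((measurable_pi_apply j).comp (hwmeas m)).mul_const _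
      have e1 : ∫ b, f (∑ j, b j * a j) ∂(μ.map (w m)) = ∫ ω, f (∑ j, w m ω j * a j) ∂μ :=
        integral_map (hwmeas m).aemeasurable (f.continuous.comp hsm).aestronglyMeasurable
      have e2 : ∫ ω, f (∑ j, w m ω j * a j) ∂μ
          = ∫ y, f y ∂(μ.map (fun ω => ∑ j, w m ω j * a j)) :=
        (integral_map hmeas2.aemeasurable f.continuous.aestronglyMeasurable).symm
      rw [e1, e2, hlawsum m a, ← hcoe m a]
      exact aux_G_eq f _
    have h4 : ∫ a, (∫ b, f (∑ j, b j * a j) ∂(μ.map (w m))) ∂(μ.map (x m))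
        = ∫ a : Fin m → ℝ, G ((1 / (m : ℝ)) * ∑ j, (a j) ^ 2) ∂(μ.map (x m)) :=
      integral_congr_ae (Filter.Eventually.of_forall h3)
    have h5 : ∫ a : Fin m → ℝ, G ((1 / (m : ℝ)) * ∑ j, (a j) ^ 2) ∂(μ.map (x m))
        = ∫ ω, G (S m ω) ∂μ :=
      integral_map (hxmeas m).aemeasurable (hGcont.comp (continuous_const.mul
        (continuous_finset_sum _ fun j _ => (continuous_apply j).pow 2))).aestronglyMeasurable
    rw [h1, h2, h4, h5]
  -- final: dominated convergence
  have hlim : Tendsto (fun m : ℕ => ∫ ω, G (S m ω) ∂μ) atTop (nhds (∫ _ω, G (σsq : ℝ) ∂μ)) := by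
    apply tendsto_integral_of_dominated_convergence (bound := fun _ => ‖f‖)
    · exact fun m => (hGcont.measurable.comp (hSmeas m)).aestronglyMeasurable
    · exact integrable_const _
    · exact fun m => Filter.Eventually.of_forall fun ω => aux_G_bound f _
    · filter_upwards [hx] with ω hω
      exact (hGcont.tendsto _).comp hω
  have hfinal : ∫ _ω, G (σsq : ℝ) ∂μ = ∫ z, f z ∂(gaussianReal 0 σsq) := by
    rw [integral_const, probReal_univ, one_smul, aux_G_eq f σsq]
  rw [← hfinal]
  have : (fun m : ℕ => ∫ ω, f (∑ j, w m ω j * x m ω j) ∂μ)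
      = fun m : ℕ => ∫ ω, G (S m ω) ∂μ := funext key
  rw [this]
  exact hlim
end

section
/- Let σ be the positively p-homogeneous activation with parameters p ≥ 2 and α > β ≥ 0, and let Z ~ N(0, v²) and U ~ N(0, w²) be independent centered Gaussian random variables. Then for every λ ∈ ℝ, E[σ(Z) σ(−λ U σ'(Z))] = |λ|^p · E[σ(Z) |σ'(Z)|^p] · E[σ(U)]. If moreover λ ≠ 0, v > 0 and w > 0, then 0 < E[σ(Z) σ(−λ U σ'(Z))] < ∞. -/
open MeasureTheory ProbabilityTheory

/-- The positively `p`-homogeneous activation: `σ(z) = α z^p` for `z ≥ 0`,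
`σ(z) = β (−z)^p` for `z < 0`. -/
noncomputable def act (α β p z : ℝ) : ℝ := if 0 ≤ z then α * z ^ p else β * (-z) ^ p

/-- Its derivative: `σ'(z) = α p z^{p−1}` for `z ≥ 0`, `σ'(z) = −β p (−z)^{p−1}` for `z < 0`. -/
noncomputable def actD (α β p z : ℝ) : ℝ :=
  if 0 ≤ z then α * p * z ^ (p - 1) else -(β * p * (-z) ^ (p - 1))

section helpers

open Real Set Function

variable {p α β : ℝ}

lemma act_nonneg (hα : 0 ≤ α) (hβ : 0 ≤ β) (z : ℝ) : 0 ≤ act α β p z := by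
  unfold act
  rcases le_or_gt 0 z with h | h
  · rw [if_pos h]; exact mul_nonneg hα (rpow_nonneg h p)
  · rw [if_neg (not_le.mpr h)]; exact mul_nonneg hβ (rpow_nonneg (by linarith) p)

lemma act_le_abs (hβα : β ≤ α) (z : ℝ) : act α β p z ≤ α * |z| ^ p := by
  unfold act
  rcases le_or_gt 0 z with h | h
  · rw [if_pos h, abs_of_nonneg h]
  · rw [if_neg (not_le.mpr h), abs_of_neg h]
    exact mul_le_mul_of_nonneg_right hβα (rpow_nonneg (by linarith) p)

lemma abs_actD_le (hp1 : 0 ≤ p) (hα : 0 ≤ α) (hβ : 0 ≤ β) (hβα : β ≤ α) (z : ℝ) :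
    |actD α β p z| ≤ α * p * |z| ^ (p - 1) := by
  unfold actD
  rcases le_or_gt 0 z with h | h
  · rw [if_pos h, abs_of_nonneg (mul_nonneg (mul_nonneg hα hp1) (rpow_nonneg h _)),
      abs_of_nonneg h]
  · rw [if_neg (not_le.mpr h), abs_neg,
      abs_of_nonneg (mul_nonneg (mul_nonneg hβ hp1) (rpow_nonneg (by linarith) _)),
      abs_of_neg h]
    exact mul_le_mul_of_nonneg_right (mul_le_mul_of_nonneg_right hβα hp1)
      (rpow_nonneg (by linarith) _)

lemma act_const_mul (hp0 : p ≠ 0) {c : ℝ} (hc : 0 ≤ c) (u : ℝ) :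
    act α β p (c * u) = c ^ p * act α β p u := by
  rcases hc.lt_or_eq with hc0 | rfl
  · unfold act
    rcases le_or_gt 0 u with hu | hu
    · rw [if_pos hu, if_pos (mul_nonneg hc0.le hu), mul_rpow hc0.le hu]; ring
    · rw [if_neg (not_le.mpr hu), if_neg (not_le.mpr (mul_neg_of_pos_of_neg hc0 hu)),
        show -(c * u) = c * -u by ring, mul_rpow hc0.le (by linarith)]
      ring
  · simp [act, zero_rpow hp0]

lemma measurable_act : Measurable (act α β p) := by
  unfold act
  apply Measurable.ite measurableSet_Ici <;> fun_prop

lemma measurable_actD : Measurable (actD α β p) := by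
  unfold actD
  apply Measurable.ite measurableSet_Ici <;> fun_prop

lemma gaussianReal_map_neg (V : NNReal) :
    Measure.map (fun x : ℝ => -x) (gaussianReal 0 V) = gaussianReal 0 V := by
  have h := gaussianReal_map_const_mul (μ := 0) (v := V) (-1)
  have h2 : (NNReal.mk ((-1 : ℝ) ^ 2) (sq_nonneg _) : NNReal) = 1 := by ext; norm_num
  rw [h2, one_mul, mul_zero] at h
  simpa [neg_one_mul] using h

lemma integral_neg_gauss (V : NNReal) {g : ℝ → ℝ} (hg : Measurable g) :
    ∫ x, g (-x) ∂(gaussianReal 0 V) = ∫ x, g x ∂(gaussianReal 0 V) := by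
  conv_rhs => rw [← gaussianReal_map_neg V]
  rw [integral_map measurable_neg.aemeasurable hg.aestronglyMeasurable]

lemma integrable_abs_rpow_mul_exp {b : ℝ} (hb : 0 < b) {s : ℝ} (hs : 0 ≤ s) :
    Integrable fun x : ℝ => |x| ^ s * Real.exp (-b * x ^ 2) := by
  have hs' : (-1 : ℝ) < s := by linarith
  have hIoi : IntegrableOn (fun x : ℝ => |x| ^ s * Real.exp (-b * x ^ 2)) (Ioi 0) := by
    refine (integrableOn_rpow_mul_exp_neg_mul_sq hb hs').congr_fun (fun x hx => ?_)
      measurableSet_Ioi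
    rw [abs_of_pos hx]
  rw [← integrableOn_univ, ← Iio_union_Ici (a := (0 : ℝ)), integrableOn_union,
    integrableOn_Ici_iff_integrableOn_Ioi]
  refine ⟨?_, hIoi⟩
  rw [← (Measure.measurePreserving_neg (volume : Measure ℝ)).integrableOn_comp_preimage
      (Homeomorph.neg ℝ).measurableEmbedding]
  simp only [Function.comp_def, abs_neg, neg_sq, neg_preimage, neg_Iio, neg_neg, neg_zero]
  exact hIoi

set_option maxHeartbeats 1000000 in
lemma integrable_abs_rpow_gauss (V : NNReal) {s : ℝ} (hs : 0 ≤ s) :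
    Integrable (fun x : ℝ => |x| ^ s) (gaussianReal 0 V) := by
  by_cases hV : V = 0
  · subst hV
    rw [gaussianReal_zero_var]
    refine (integrable_const ((fun x : ℝ => |x| ^ s) 0)).congr ?_
    exact (ae_eq_dirac (fun x : ℝ => |x| ^ s)).symm
  · have hVpos : (0 : ℝ) < (V : ℝ) := by positivity
    rw [gaussianReal_of_var_ne_zero 0 hV, gaussianPDF_def,
      integrable_withDensity_iff (measurable_gaussianPDFReal 0 V).ennreal_ofReal
        (ae_of_all _ fun x => ENNReal.ofReal_lt_top)]
    have hb : (0 : ℝ) < (2 * (V : ℝ))⁻¹ := by positivity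
    refine ((integrable_abs_rpow_mul_exp hb hs).const_mul
      ((Real.sqrt (2 * Real.pi * V))⁻¹)).congr (ae_of_all _ fun x => ?_)
    show (Real.sqrt (2 * Real.pi * V))⁻¹ * (|x| ^ s * Real.exp (-(2 * (V : ℝ))⁻¹ * x ^ 2))
        = |x| ^ s * (ENNReal.ofReal (gaussianPDFReal 0 V x)).toReal
    rw [ENNReal.toReal_ofReal (gaussianPDFReal_nonneg 0 V x)]
    simp only [gaussianPDFReal]
    rw [show -(x - 0) ^ 2 / (2 * (V : ℝ)) = -(2 * (V : ℝ))⁻¹ * x ^ 2 by ring]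
    ring

lemma integral_act_const_mul (hp0 : p ≠ 0) (V : NNReal) (t : ℝ) :
    ∫ u, act α β p (t * u) ∂(gaussianReal 0 V)
      = |t| ^ p * ∫ u, act α β p u ∂(gaussianReal 0 V) := by
  rcases le_or_gt 0 t with ht | ht
  · simp_rw [act_const_mul hp0 ht, integral_const_mul, abs_of_nonneg ht]
  · have h1 : ∀ u : ℝ, t * u = (-t) * (-u) := fun u => by ring
    simp_rw [h1, act_const_mul hp0 (by linarith : (0 : ℝ) ≤ -t), integral_const_mul,
      abs_of_neg ht]
    congr 1
    exact integral_neg_gauss V measurable_act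

lemma integral_gauss_pos {V : NNReal} (hV : V ≠ 0) {g : ℝ → ℝ}
    (hint : Integrable g (gaussianReal 0 V)) (h0 : ∀ x, 0 ≤ g x)
    (hpos : ∀ x, 0 < x → 0 < g x) : 0 < ∫ x, g x ∂(gaussianReal 0 V) := by
  rw [integral_pos_iff_support_of_nonneg_ae (ae_of_all _ h0) hint]
  refine lt_of_lt_of_le ?_ (measure_mono fun x (hx : x ∈ Ioi 0) => (hpos x hx).ne')
  rw [gaussianReal_apply 0 hV, lintegral_pos_iff_support (measurable_gaussianPDF 0 V)]
  have hsupp : Function.support (gaussianPDF 0 V) = Set.univ :=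
    Set.eq_univ_of_forall fun x => (gaussianPDF_pos 0 hV x).ne'
  rw [Measure.restrict_apply' measurableSet_Ioi, hsupp, Set.univ_inter, Real.volume_Ioi]
  exact ENNReal.zero_lt_top

end helpers

/-- For independent `Z ~ N(0, v²)`, `U ~ N(0, w²)` (encoded by the product
measure) and any `λ ∈ ℝ`:
`E[σ(Z) σ(−λ U σ'(Z))] = |λ|^p E[σ(Z)|σ'(Z)|^p] E[σ(U)]`; and if `λ ≠ 0`, `v > 0`, `w > 0`
then `0 < E[σ(Z) σ(−λ U σ'(Z))] < ∞`. -/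
theorem stmt_8 (p α β : ℝ) (hp : 2 ≤ p) (hβ : 0 ≤ β) (hαβ : β < α)
    (v w : NNReal) (lam : ℝ) :
    ((∫ zu : ℝ × ℝ, act α β p zu.1 * act α β p (-lam * zu.2 * actD α β p zu.1)
          ∂((gaussianReal 0 (v ^ 2)).prod (gaussianReal 0 (w ^ 2)))) =
        |lam| ^ p * (∫ z, act α β p z * |actD α β p z| ^ p ∂(gaussianReal 0 (v ^ 2))) *
          ∫ u, act α β p u ∂(gaussianReal 0 (w ^ 2))) ∧
      (lam ≠ 0 → 0 < v → 0 < w →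
        0 < (∫ zu : ℝ × ℝ, act α β p zu.1 * act α β p (-lam * zu.2 * actD α β p zu.1)
              ∂((gaussianReal 0 (v ^ 2)).prod (gaussianReal 0 (w ^ 2)))) ∧
          Integrable
            (fun zu : ℝ × ℝ => act α β p zu.1 * act α β p (-lam * zu.2 * actD α β p zu.1))
            ((gaussianReal 0 (v ^ 2)).prod (gaussianReal 0 (w ^ 2)))) := by
  have hα : 0 < α := hβ.trans_lt hαβ
  have hp0 : (0 : ℝ) < p := by linarith
  have hq : (0 : ℝ) < p + (p - 1) * p := by nlinarith
  set γv := gaussianReal 0 (v ^ 2) with hγv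
  set γw := gaussianReal 0 (w ^ 2) with hγw
  -- expansion of the inner power
  have hexp : ∀ z : ℝ, (α * p * |z| ^ (p - 1)) ^ p
      = (α * p) ^ p * |z| ^ ((p - 1) * p) := by
    intro z
    rw [Real.mul_rpow (by positivity) (Real.rpow_nonneg (abs_nonneg z) _),
      ← Real.rpow_mul (abs_nonneg z)]
  have habs2 : ∀ z : ℝ, |z| ^ p * |z| ^ ((p - 1) * p) = |z| ^ (p + (p - 1) * p) := by
    intro z
    rw [Real.rpow_add' (abs_nonneg z) hq.ne']
  -- pointwise bound
  have hbound : ∀ zu : ℝ × ℝ,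
      ‖act α β p zu.1 * act α β p (-lam * zu.2 * actD α β p zu.1)‖ ≤
        (α ^ 2 * (|lam| * (α * p)) ^ p * |zu.1| ^ (p + (p - 1) * p)) * |zu.2| ^ p := by
    rintro ⟨z, u⟩
    have hA : |(-lam * u * actD α β p z)| ≤ |lam| * (α * p) * |z| ^ (p - 1) * |u| := by
      calc |(-lam * u * actD α β p z)| = |lam| * |u| * |actD α β p z| := by
            rw [abs_mul, abs_mul, abs_neg]
          _ ≤ |lam| * |u| * (α * p * |z| ^ (p - 1)) :=
            mul_le_mul_of_nonneg_left (abs_actD_le hp0.le hα.le hβ hαβ.le z) (by positivity)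
          _ = |lam| * (α * p) * |z| ^ (p - 1) * |u| := by ring
    rw [Real.norm_eq_abs,
      abs_of_nonneg (mul_nonneg (act_nonneg hα.le hβ _) (act_nonneg hα.le hβ _))]
    calc act α β p z * act α β p (-lam * u * actD α β p z)
        ≤ (α * |z| ^ p) * (α * |(-lam * u * actD α β p z)| ^ p) :=
          mul_le_mul (act_le_abs hαβ.le z) (act_le_abs hαβ.le _)
            (act_nonneg hα.le hβ _) (by positivity)
      _ ≤ (α * |z| ^ p) * (α * (|lam| * (α * p) * |z| ^ (p - 1) * |u|) ^ p) := by
          have := Real.rpow_le_rpow (abs_nonneg _) hA hp0.le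
          have h2 : α * |(-lam * u * actD α β p z)| ^ p
              ≤ α * (|lam| * (α * p) * |z| ^ (p - 1) * |u|) ^ p :=
            mul_le_mul_of_nonneg_left this hα.le
          exact mul_le_mul_of_nonneg_left h2 (by positivity)
      _ = (α ^ 2 * (|lam| * (α * p)) ^ p * |z| ^ (p + (p - 1) * p)) * |u| ^ p := by
          rw [Real.mul_rpow (by positivity) (abs_nonneg u),
            Real.mul_rpow (by positivity) (Real.rpow_nonneg (abs_nonneg z) _),
            ← Real.rpow_mul (abs_nonneg z), ← habs2 z]
          ring
  -- measurability
  have hmeas : Measurable (fun zu : ℝ × ℝ =>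
      act α β p zu.1 * act α β p (-lam * zu.2 * actD α β p zu.1)) := by
    refine (measurable_act.comp measurable_fst).mul (measurable_act.comp ?_)
    exact (measurable_snd.const_mul (-lam)).mul (measurable_actD.comp measurable_fst)
  -- product integrability
  have hprodInt : Integrable (fun zu : ℝ × ℝ =>
      act α β p zu.1 * act α β p (-lam * zu.2 * actD α β p zu.1)) (γv.prod γw) := by
    have hF : Integrable
        (fun z : ℝ => (α ^ 2 * (|lam| * (α * p)) ^ p) * |z| ^ (p + (p - 1) * p)) γv :=
      (integrable_abs_rpow_gauss _ hq.le).const_mul _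
    have hG : Integrable (fun u : ℝ => |u| ^ p) γw := integrable_abs_rpow_gauss _ hp0.le
    refine (hF.mul_prod hG).mono' hmeas.aestronglyMeasurable (ae_of_all _ fun zu => ?_)
    calc ‖act α β p zu.1 * act α β p (-lam * zu.2 * actD α β p zu.1)‖
        ≤ (α ^ 2 * (|lam| * (α * p)) ^ p * |zu.1| ^ (p + (p - 1) * p)) * |zu.2| ^ p :=
          hbound zu
      _ = _ := by ring
  -- the inner integral computation
  have hE := fun (z : ℝ) => by
    have harg : ∀ u : ℝ, -lam * u * actD α β p z = (-(lam * actD α β p z)) * u :=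
      fun u => by ring
    calc ∫ u, act α β p z * act α β p (-lam * u * actD α β p z) ∂γw
        = act α β p z * ∫ u, act α β p ((-(lam * actD α β p z)) * u) ∂γw := by
          simp_rw [harg]; rw [integral_const_mul]
      _ = (|lam| ^ p * ∫ u, act α β p u ∂γw) * (act α β p z * |actD α β p z| ^ p) := by
          rw [integral_act_const_mul hp0.ne' _ _, abs_neg, abs_mul,
            Real.mul_rpow (abs_nonneg lam) (abs_nonneg _)]
          ring
  -- the main identity
  have hmain : (∫ zu : ℝ × ℝ, act α β p zu.1 * act α β p (-lam * zu.2 * actD α β p zu.1)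
        ∂(γv.prod γw)) =
      |lam| ^ p * (∫ z, act α β p z * |actD α β p z| ^ p ∂γv) * ∫ u, act α β p u ∂γw := by
    rw [MeasureTheory.integral_prod _ hprodInt]
    simp only []
    calc ∫ z, ∫ u, act α β p z * act α β p (-lam * u * actD α β p z) ∂γw ∂γv
        = ∫ z, (|lam| ^ p * ∫ u, act α β p u ∂γw) * (act α β p z * |actD α β p z| ^ p) ∂γv := by
          exact integral_congr_ae (Filter.Eventually.of_forall fun z => hE z)
      _ = (|lam| ^ p * ∫ u, act α β p u ∂γw) *
            ∫ z, act α β p z * |actD α β p z| ^ p ∂γv := integral_const_mul _ _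
      _ = _ := by ring
  refine ⟨hmain, fun hlam hv hw => ?_⟩
  refine ⟨?_, hprodInt⟩
  rw [hmain]
  have hv2 : (v ^ 2 : NNReal) ≠ 0 := pow_ne_zero _ hv.ne'
  have hw2 : (w ^ 2 : NNReal) ≠ 0 := pow_ne_zero _ hw.ne'
  -- integrability of the two marginal integrands
  have hIact : Integrable (act α β p) γw := by
    refine ((integrable_abs_rpow_gauss _ hp0.le).const_mul α).mono'
      measurable_act.aestronglyMeasurable (ae_of_all _ fun z => ?_)
    rw [Real.norm_eq_abs, abs_of_nonneg (act_nonneg hα.le hβ z)]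
    exact act_le_abs hαβ.le z
  have hID : Integrable (fun z => act α β p z * |actD α β p z| ^ p) γv := by
    refine ((integrable_abs_rpow_gauss _ hq.le).const_mul
      (α * (α * p) ^ p)).mono' (measurable_act.mul
        ((by fun_prop : Measurable fun x : ℝ => x ^ p).comp measurable_actD.abs)).aestronglyMeasurable
      (ae_of_all _ fun z => ?_)
    rw [Real.norm_eq_abs, abs_of_nonneg (mul_nonneg (act_nonneg hα.le hβ z)
      (Real.rpow_nonneg (abs_nonneg _) _))]
    calc act α β p z * |actD α β p z| ^ p
        ≤ (α * |z| ^ p) * ((α * p * |z| ^ (p - 1)) ^ p) :=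
          mul_le_mul (act_le_abs hαβ.le z)
            (Real.rpow_le_rpow (abs_nonneg _) (abs_actD_le hp0.le hα.le hβ hαβ.le z) hp0.le)
            (Real.rpow_nonneg (abs_nonneg _) _) (by positivity)
      _ = α * (α * p) ^ p * |z| ^ (p + (p - 1) * p) := by
          rw [hexp z, ← habs2 z]; ring
  -- positivity
  have hpos1 : 0 < ∫ z, act α β p z * |actD α β p z| ^ p ∂γv := by
    refine integral_gauss_pos hv2 hID
      (fun x => mul_nonneg (act_nonneg hα.le hβ x) (Real.rpow_nonneg (abs_nonneg _) _))
      (fun x hx => ?_)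
    have h1 : 0 < act α β p x := by
      unfold act; rw [if_pos hx.le]; exact mul_pos hα (Real.rpow_pos_of_pos hx p)
    have h2 : 0 < actD α β p x := by
      unfold actD; rw [if_pos hx.le]
      exact mul_pos (mul_pos hα hp0) (Real.rpow_pos_of_pos hx _)
    exact mul_pos h1 (Real.rpow_pos_of_pos (abs_pos.mpr h2.ne') p)
  have hpos2 : 0 < ∫ u, act α β p u ∂γw := by
    refine integral_gauss_pos hw2 hIact (act_nonneg hα.le hβ) (fun x hx => ?_)
    unfold act; rw [if_pos hx.le]; exact mul_pos hα (Real.rpow_pos_of_pos hx p)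
  have hlamp : 0 < |lam| ^ p := Real.rpow_pos_of_pos (abs_pos.mpr hlam) p
  exact mul_pos (mul_pos hlamp hpos1) hpos2
end

section
/- Let σ : ℝ → ℝ be differentiable and positively p-homogeneous with p ≥ 1. With the network and tilde forward and backward passes at initialization as defined in the context, one has for every l ∈ [1, L]: dx^l = m^{−a_{L+1}} · γ_{b,l} · (∏_{k=l+1}^{L} γ_{f,k})^{p−1} · dx̃^l and dh^l = m^{−a_{L+1}} · γ_{b,l} · (∏_{k=l}^{L} γ_{f,k})^{p−1} · dh̃^l, where γ_{f,l} := ∏_{k=1}^{l} ω_k^{p^{l−k}} and γ_{b,l} := ∏_{k=l+1}^{L} ω_k (empty products equal 1). -/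
open Finset

/-- `γ_{f,l} = ∏_{k=1}^l ω_k^{p^{l−k}}`. -/
noncomputable def gammaF (p : ℝ) (ω : ℕ → ℝ) (l : ℕ) : ℝ :=
  ∏ k ∈ Finset.Icc 1 l, ω k ^ (p ^ (l - k))

/-- `γ_{b,l} = ∏_{k=l+1}^L ω_k` (empty product equal to 1). -/
noncomputable def gammaB (ω : ℕ → ℝ) (L l : ℕ) : ℝ := ∏ k ∈ Finset.Icc (l + 1) L, ω k

/-- backward pass with homogeneity at initialization.
For a differentiable, positively `p`-homogeneous activation (`p ≥ 1`), the backward pass of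
an ac-parameterized network and the scaleless (tilde) backward pass satisfy, for `1 ≤ l ≤ L`:
`dx^l = m^{−a_{L+1}} γ_{b,l} (∏_{k=l+1}^L γ_{f,k})^{p−1} dx̃^l` and
`dh^l = m^{−a_{L+1}} γ_{b,l} (∏_{k=l}^L γ_{f,k})^{p−1} dh̃^l`. -/
theorem stmt_13 (m d L : ℕ) (hm : 0 < m) (hL : 1 ≤ L)
    (p : ℝ) (hp : 1 ≤ p) (σ : ℝ → ℝ) (hdiff : Differentiable ℝ σ)
    (hhom : ∀ lam : ℝ, 0 < lam → ∀ z : ℝ, σ (lam * z) = lam ^ p * σ z)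
    (ξ₀ : Fin d → ℝ)
    (U1 : Matrix (Fin m) (Fin d) ℝ) (U : ℕ → Matrix (Fin m) (Fin m) ℝ)
    (UL1 v1 : Fin m → ℝ)
    (a ω : ℕ → ℝ)
    (hω1 : ω 1 = (m : ℝ) ^ (-(a 1)))
    (hω : ∀ l, 2 ≤ l → ω l = (m : ℝ) ^ ((1 : ℝ) / 2 - a l))
    (h x ht xt dx dh dxt dht : ℕ → Fin m → ℝ)
    -- forward pass
    (hh1 : h 1 = fun i => (m : ℝ) ^ (-(a 1)) * (U1.mulVec ξ₀ i + v1 i))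
    (hx : ∀ l, 1 ≤ l → l ≤ L → x l = fun i => σ (h l i))
    (hh : ∀ l, 2 ≤ l → l ≤ L →
      h l = fun i => (m : ℝ) ^ (-(a l)) * (U l).mulVec (x (l - 1)) i)
    -- scaleless (tilde) forward pass
    (hht1 : ht 1 = fun i => U1.mulVec ξ₀ i + v1 i)
    (hxt : ∀ l, 1 ≤ l → l ≤ L → xt l = fun i => σ (ht l i))
    (hht : ∀ l, 2 ≤ l → l ≤ L →
      ht l = fun i => (m : ℝ) ^ (-(1 : ℝ) / 2) * (U l).mulVec (xt (l - 1)) i)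
    -- backward pass
    (hdxL : dx L = fun i => (m : ℝ) ^ (-(a (L + 1))) * UL1 i)
    (hdh : ∀ l, 1 ≤ l → l ≤ L → dh l = fun i => dx l i * deriv σ (h l i))
    (hdx : ∀ l, 2 ≤ l → l ≤ L →
      dx (l - 1) = fun j => ∑ i, (m : ℝ) ^ (-(a l)) * U l i j * dh l i)
    -- scaleless (tilde) backward pass
    (hdxtL : dxt L = UL1)
    (hdht : ∀ l, 1 ≤ l → l ≤ L → dht l = fun i => dxt l i * deriv σ (ht l i))
    (hdxt : ∀ l, 2 ≤ l → l ≤ L →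
      dxt (l - 1) = fun j => ∑ i, (m : ℝ) ^ (-(1 : ℝ) / 2) * U l i j * dht l i) :
    ∀ l, 1 ≤ l → l ≤ L →
      (dx l = fun i => (m : ℝ) ^ (-(a (L + 1))) * gammaB ω L l *
          (∏ k ∈ Icc (l + 1) L, gammaF p ω k) ^ (p - 1) * dxt l i) ∧
      (dh l = fun i => (m : ℝ) ^ (-(a (L + 1))) * gammaB ω L l *
          (∏ k ∈ Icc l L, gammaF p ω k) ^ (p - 1) * dht l i) := by
  have hmpos : (0:ℝ) < m := by exact_mod_cast hm
  have hωpos : ∀ k, 1 ≤ k → 0 < ω k := by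
    intro k hk
    rcases eq_or_lt_of_le hk with h1 | h2
    · rw [← h1, hω1]; exact Real.rpow_pos_of_pos hmpos _
    · rw [hω k h2]; exact Real.rpow_pos_of_pos hmpos _
  have hgFpos : ∀ l, 0 < gammaF p ω l := by
    intro l
    apply Finset.prod_pos
    intro k hk
    exact Real.rpow_pos_of_pos (hωpos k (mem_Icc.mp hk).1) _
  have hgFrec : ∀ l, 1 ≤ l → gammaF p ω (l + 1) = ω (l + 1) * (gammaF p ω l) ^ p := by
    intro l hl
    unfold gammaF
    rw [Finset.prod_Icc_succ_top (by omega)]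
    have h1 : (p ^ (l + 1 - (l + 1))) = (1 : ℝ) := by simp
    rw [h1, Real.rpow_one, mul_comm,
      ← Real.finset_prod_rpow _ _ (fun i hi => (Real.rpow_pos_of_pos
        (hωpos i (mem_Icc.mp hi).1) _).le) p]
    congr 1
    apply Finset.prod_congr rfl
    intro k hk
    have hk' := mem_Icc.mp hk
    rw [← Real.rpow_mul (hωpos k hk'.1).le]
    congr 1
    rw [show l + 1 - k = (l - k) + 1 from by omega, pow_succ]
  -- derivative homogeneity
  have hder : ∀ lam : ℝ, 0 < lam → ∀ z, deriv σ (lam * z) = lam ^ (p - 1) * deriv σ z := by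
    intro lam hlam z
    have d1 : HasDerivAt (fun y : ℝ => σ (lam * y)) (deriv σ (lam * z) * lam) z := by
      have := (hdiff (lam * z)).hasDerivAt.comp z ((hasDerivAt_id z).const_mul lam)
      simpa [Function.comp_def] using this
    have d2 : HasDerivAt (fun y : ℝ => σ (lam * y)) (lam ^ p * deriv σ z) z := by
      have h2 : (fun y : ℝ => σ (lam * y)) = fun y => lam ^ p * σ y := by
        funext y; exact hhom lam hlam y
      rw [h2]
      exact (hdiff z).hasDerivAt.const_mul _
    have heq := d1.unique d2
    have hne : lam ≠ 0 := ne_of_gt hlam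
    have hpow : lam ^ p = lam ^ (p - 1) * lam := by
      rw [← Real.rpow_add_one hne]; norm_num
    apply mul_right_cancel₀ hne
    rw [heq, hpow]; ring
  -- forward comparison
  have hfor : ∀ l, 1 ≤ l → l ≤ L → h l = fun i => gammaF p ω l * ht l i := by
    intro l hl
    induction l, hl using Nat.le_induction with
    | base =>
      intro _
      rw [hh1, hht1]
      funext i
      have hg1 : gammaF p ω 1 = ω 1 := by
        unfold gammaF
        rw [Finset.Icc_self, Finset.prod_singleton]
        simp
      rw [hg1, hω1]
    | succ l hl ih =>
      intro hl1L
      have hlL : l ≤ L := by omega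
      have heq := ih hlL
      have hxl : x l = (gammaF p ω l) ^ p • xt l := by
        funext i
        rw [hx l hl hlL, hxt l hl hlL]
        simp only [Pi.smul_apply, smul_eq_mul]
        have hhl : h l i = gammaF p ω l * ht l i := by rw [heq]
        rw [hhl, hhom (gammaF p ω l) (hgFpos l) (ht l i)]
      rw [hh (l+1) (by omega) hl1L, hht (l+1) (by omega) hl1L]
      funext i
      simp only [Nat.add_sub_cancel]
      rw [hxl, Matrix.mulVec_smul]
      simp only [Pi.smul_apply, smul_eq_mul]
      rw [hgFrec l hl, hω (l+1) (by omega)]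
      have hm2 : (m:ℝ) ^ (-(a (l+1))) =
          (m:ℝ) ^ ((1:ℝ)/2 - a (l+1)) * (m:ℝ) ^ (-(1:ℝ)/2) := by
        rw [← Real.rpow_add hmpos]; congr 1; ring
      rw [hm2]; ring
  -- product splitting
  have hsplit : ∀ (f : ℕ → ℝ) (l : ℕ), l ≤ L →
      ∏ k ∈ Icc l L, f k = f l * ∏ k ∈ Icc (l+1) L, f k := by
    intro f l hl
    rw [Finset.Icc_eq_cons_Ioc hl, Finset.prod_cons, Finset.Icc_add_one_left_eq_Ioc]
  have hprodpos : ∀ l, 0 < ∏ k ∈ Icc l L, gammaF p ω k :=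
    fun l => Finset.prod_pos (fun k _ => hgFpos k)
  -- dh from dx
  have keydh : ∀ l, 1 ≤ l → l ≤ L →
      dx l = (fun i => (m:ℝ)^(-(a (L+1))) * gammaB ω L l *
        (∏ k ∈ Icc (l+1) L, gammaF p ω k) ^ (p-1) * dxt l i) →
      dh l = fun i => (m:ℝ)^(-(a (L+1))) * gammaB ω L l *
        (∏ k ∈ Icc l L, gammaF p ω k) ^ (p-1) * dht l i := by
    intro l hl hlL hdxl
    funext i
    simp only [hdh l hl hlL, hdht l hl hlL, hdxl]
    have hhl : h l i = gammaF p ω l * ht l i := by rw [hfor l hl hlL]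
    rw [hhl, hder (gammaF p ω l) (hgFpos l) (ht l i)]
    rw [hsplit (fun k => gammaF p ω k) l hlL,
      Real.mul_rpow (hgFpos l).le (hprodpos (l+1)).le]
    ring
  -- base case
  have hempty : Finset.Icc (L+1) L = (∅ : Finset ℕ) := Finset.Icc_eq_empty (by omega)
  have base : dx L = fun i => (m:ℝ)^(-(a (L+1))) * gammaB ω L L *
      (∏ k ∈ Icc (L+1) L, gammaF p ω k) ^ (p-1) * dxt L i := by
    rw [hdxL, hdxtL]
    funext i
    simp [gammaB, hempty]
  -- main downward induction
  have main : ∀ k l, 1 ≤ l → l + k = L →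
      dx l = fun i => (m:ℝ)^(-(a (L+1))) * gammaB ω L l *
        (∏ k ∈ Icc (l+1) L, gammaF p ω k) ^ (p-1) * dxt l i := by
    intro k
    induction k with
    | zero =>
      intro l hl hlk
      have hlL : l = L := by omega
      subst hlL
      exact base
    | succ k ih =>
      intro l hl hlk
      have hIH := ih (l+1) (by omega) (by omega)
      have hdh1 := keydh (l+1) (by omega) (by omega) hIH
      have hdxeq := hdx (l+1) (by omega) (by omega)
      have hdxteq := hdxt (l+1) (by omega) (by omega)
      simp only [Nat.add_sub_cancel] at hdxeq hdxteq
      rw [hdxeq, hdxteq]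
      funext j
      simp only [hdh1]
      have hω2 : (m:ℝ) ^ (-(a (l+1))) = ω (l+1) * (m:ℝ) ^ (-(1:ℝ)/2) := by
        rw [hω (l+1) (by omega), ← Real.rpow_add hmpos]; congr 1; ring
      have hgB : gammaB ω L l = ω (l+1) * gammaB ω L (l+1) := by
        unfold gammaB
        exact hsplit ω (l+1) (by omega)
      have hgF2 : (∏ kk ∈ Icc (l+1) L, gammaF p ω kk) ^ (p-1) =
          (gammaF p ω (l+1)) ^ (p-1) * (∏ kk ∈ Icc (l+1+1) L, gammaF p ω kk) ^ (p-1) := by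
        rw [hsplit (fun kk => gammaF p ω kk) (l+1) (by omega),
          Real.mul_rpow (hgFpos _).le (hprodpos _).le]
      rw [Finset.mul_sum]
      apply Finset.sum_congr rfl
      intro i _
      rw [hω2, hgB, hgF2]
      ring
  intro l hl hlL
  have hdxl := main (L - l) l hl (by omega)
  exact ⟨hdxl, keydh l hl hlL hdxl⟩
end

section
/- Let σ : ℝ → ℝ be differentiable and positively p-homogeneous with p ≥ 1. With the network, tilde passes, and first SGD update defined in the context, the first updates of the effective weights satisfy: ΔW¹(1) = −η χ₀ m^{−(a_{L+1}+2a₁+c₁)} ω₁^{p^L − 1} (∏_{k=2}^{L} ω_k^{p^{L−k+1}}) dh̃¹ ξ₀ᵀ; ΔB¹(1) = −η χ₀ m^{−(a_{L+1}+2a₁+c₁)} ω₁^{p^L − 1} (∏_{k=2}^{L} ω_k^{p^{L−k+1}}) dh̃¹; ΔW^l(1) = −η χ₀ m^{−(a_{L+1}+2a_l+c_l−1)} (∏_{k=1}^{L} ω_k^{p^{L−k+1}}) ω_l^{−1} · (dh̃^l (x̃^{l−1})ᵀ)/m for 2 ≤ l ≤ L; and ΔW^{L+1}(1) = −η χ₀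 m^{−(2a_{L+1}+c_{L+1}−1)} (∏_{k=1}^{L} ω_k^{p^{L−k+1}}) x̃^L/m. -/
open Finset

/-- first weight updates with homogeneity, general ac-parameterization.
For a differentiable, positively `p`-homogeneous activation (`p ≥ 1`), the first SGD updates
of the effective weights of an ac-parameterized network (no biases except at layer 1), after
one forward-backward pass on `(ξ₀, y₀)` with `χ₀ = ∂₂ℓ(y₀, f(ξ₀))`, are given in terms of
the scaleless (tilde) variables by the stated formulas. -/
theorem stmt_14 (m d L : ℕ) (hm : 0 < m) (hL : 1 ≤ L)
    (p : ℝ) (hp : 1 ≤ p) (σ : ℝ → ℝ) (hdiff : Differentiable ℝ σ)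
    (hhom : ∀ lam : ℝ, 0 < lam → ∀ z : ℝ, σ (lam * z) = lam ^ p * σ z)
    (ξ₀ : Fin d → ℝ) (y₀ : ℝ)
    (U1 : Matrix (Fin m) (Fin d) ℝ) (U : ℕ → Matrix (Fin m) (Fin m) ℝ)
    (UL1 v1 : Fin m → ℝ)
    (a c ω : ℕ → ℝ)
    (hω1 : ω 1 = (m : ℝ) ^ (-(a 1)))
    (hω : ∀ l, 2 ≤ l → ω l = (m : ℝ) ^ ((1 : ℝ) / 2 - a l))
    (h x ht xt dx dh dxt dht : ℕ → Fin m → ℝ)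
    -- forward pass
    (hh1 : h 1 = fun i => (m : ℝ) ^ (-(a 1)) * (U1.mulVec ξ₀ i + v1 i))
    (hx : ∀ l, 1 ≤ l → l ≤ L → x l = fun i => σ (h l i))
    (hh : ∀ l, 2 ≤ l → l ≤ L →
      h l = fun i => (m : ℝ) ^ (-(a l)) * (U l).mulVec (x (l - 1)) i)
    -- scaleless (tilde) forward pass
    (hht1 : ht 1 = fun i => U1.mulVec ξ₀ i + v1 i)
    (hxt : ∀ l, 1 ≤ l → l ≤ L → xt l = fun i => σ (ht l i))
    (hht : ∀ l, 2 ≤ l → l ≤ L →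
      ht l = fun i => (m : ℝ) ^ (-(1 : ℝ) / 2) * (U l).mulVec (xt (l - 1)) i)
    -- backward pass
    (hdxL : dx L = fun i => (m : ℝ) ^ (-(a (L + 1))) * UL1 i)
    (hdh : ∀ l, 1 ≤ l → l ≤ L → dh l = fun i => dx l i * deriv σ (h l i))
    (hdx : ∀ l, 2 ≤ l → l ≤ L →
      dx (l - 1) = fun j => ∑ i, (m : ℝ) ^ (-(a l)) * U l i j * dh l i)
    -- scaleless (tilde) backward pass
    (hdxtL : dxt L = UL1)
    (hdht : ∀ l, 1 ≤ l → l ≤ L → dht l = fun i => dxt l i * deriv σ (ht l i))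
    (hdxt : ∀ l, 2 ≤ l → l ≤ L →
      dxt (l - 1) = fun j => ∑ i, (m : ℝ) ^ (-(1 : ℝ) / 2) * U l i j * dht l i)
    -- loss, output, χ₀ and the first SGD updates of the effective weights
    (loss : ℝ → ℝ → ℝ) (hloss : ∀ y, Differentiable ℝ (loss y))
    (η : ℝ) (hη : 0 < η)
    (f0 : ℝ) (hf0 : f0 = (m : ℝ) ^ (-(a (L + 1))) * ∑ i, UL1 i * x L i)
    (χ₀ : ℝ) (hχ₀ : χ₀ = deriv (loss y₀) f0)
    (ΔW1 : Matrix (Fin m) (Fin d) ℝ) (ΔB1 : Fin m → ℝ)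
    (ΔW : ℕ → Matrix (Fin m) (Fin m) ℝ) (ΔWL1 : Fin m → ℝ)
    (hΔW1 : ∀ i j, ΔW1 i j = -η * (m : ℝ) ^ (-(2 * a 1 + c 1)) * χ₀ * dh 1 i * ξ₀ j)
    (hΔB1 : ∀ i, ΔB1 i = -η * (m : ℝ) ^ (-(2 * a 1 + c 1)) * χ₀ * dh 1 i)
    (hΔW : ∀ l, 2 ≤ l → l ≤ L → ∀ i j,
      ΔW l i j = -η * (m : ℝ) ^ (-(2 * a l + c l)) * χ₀ * dh l i * x (l - 1) j)
    (hΔWL1 : ∀ i, ΔWL1 i = -η * (m : ℝ) ^ (-(2 * a (L + 1) + c (L + 1))) * χ₀ * x L i) :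
    (∀ i j, ΔW1 i j =
        -η * χ₀ * (m : ℝ) ^ (-(a (L + 1) + 2 * a 1 + c 1)) * ω 1 ^ (p ^ L - 1) *
          (∏ k ∈ Icc 2 L, ω k ^ (p ^ (L - k + 1))) * dht 1 i * ξ₀ j) ∧
      (∀ i, ΔB1 i =
        -η * χ₀ * (m : ℝ) ^ (-(a (L + 1) + 2 * a 1 + c 1)) * ω 1 ^ (p ^ L - 1) *
          (∏ k ∈ Icc 2 L, ω k ^ (p ^ (L - k + 1))) * dht 1 i) ∧
      (∀ l, 2 ≤ l → l ≤ L → ∀ i j, ΔW l i j =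
        -η * χ₀ * (m : ℝ) ^ (-(a (L + 1) + 2 * a l + c l - 1)) *
          (∏ k ∈ Icc 1 L, ω k ^ (p ^ (L - k + 1))) * (ω l)⁻¹ *
          (dht l i * xt (l - 1) j) / m) ∧
      ∀ i, ΔWL1 i =
        -η * χ₀ * (m : ℝ) ^ (-(2 * a (L + 1) + c (L + 1) - 1)) *
          (∏ k ∈ Icc 1 L, ω k ^ (p ^ (L - k + 1))) * xt L i / m := by

  have hm' : (0:ℝ) < m := by exact_mod_cast hm
  have hmne : ((m:ℝ)) ≠ 0 := hm'.ne'
  have ωpos : ∀ k, 1 ≤ k → 0 < ω k := by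
    intro k hk
    rcases eq_or_lt_of_le hk with hk1 | hk2
    · rw [← hk1, hω1]; exact Real.rpow_pos_of_pos hm' _
    · rw [hω k hk2]; exact Real.rpow_pos_of_pos hm' _
  set A : ℕ → ℝ := fun l => ∏ k ∈ Icc 1 l, ω k ^ (p ^ (l - k)) with hAdef
  have Apos : ∀ l, 0 < A l := by
    intro l
    exact Finset.prod_pos fun k hk => Real.rpow_pos_of_pos (ωpos k (Finset.mem_Icc.mp hk).1) _
  have Ap : ∀ l, (A l) ^ p = ∏ k ∈ Icc 1 l, ω k ^ (p ^ (l - k + 1)) := by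
    intro l
    simp only [hAdef]
    rw [← Real.finset_prod_rpow _ _ (fun k hk => Real.rpow_nonneg (ωpos k (Finset.mem_Icc.mp hk).1).le _) p]
    refine Finset.prod_congr rfl fun k hk => ?_
    rw [← Real.rpow_mul (ωpos k (Finset.mem_Icc.mp hk).1).le, ← pow_succ]
  have A1 : A 1 = ω 1 := by
    simp only [hAdef]
    rw [Finset.Icc_self, Finset.prod_singleton, Nat.sub_self, pow_zero, Real.rpow_one]
  have Arec : ∀ l, A (l + 1) = ω (l + 1) * (A l) ^ p := by
    intro l
    rw [Ap]
    simp only [hAdef]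
    rw [Finset.prod_Icc_succ_top (Nat.le_add_left 1 l), Nat.sub_self, pow_zero, Real.rpow_one,
      mul_comm]
    congr 1
    refine Finset.prod_congr rfl fun k hk => ?_
    rw [show l + 1 - k = l - k + 1 by
      have := (Finset.mem_Icc.mp hk).2; omega]
  have hscale : ∀ l, 2 ≤ l → (m:ℝ) ^ (-(a l)) = ω l * (m:ℝ) ^ (-(1:ℝ)/2) := by
    intro l hl
    rw [hω l hl, ← Real.rpow_add hm']
    congr 1
    ring
  have hderiv : ∀ lam : ℝ, 0 < lam → ∀ z : ℝ,
      deriv σ (lam * z) = lam ^ (p - 1) * deriv σ z := by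
    intro lam hlam z
    have h1 : HasDerivAt (fun w => σ (lam * w)) (deriv σ (lam * z) * lam) z := by
      have hg : HasDerivAt σ (deriv σ (lam * z)) (lam * z) := (hdiff (lam * z)).hasDerivAt
      have hf : HasDerivAt (fun w : ℝ => lam * w) lam z := by
        simpa using (hasDerivAt_id z).const_mul lam
      exact hg.comp z hf
    have h2 : HasDerivAt (fun w => σ (lam * w)) (lam ^ p * deriv σ z) z := by
      have he : (fun w => σ (lam * w)) = fun w => lam ^ p * σ w := funext fun w => hhom lam hlam w
      rw [he]
      exact ((hdiff z).hasDerivAt).const_mul _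
    have h3 : deriv σ (lam * z) * lam = lam ^ p * deriv σ z := h1.unique h2
    have h4 : lam ^ (p - 1) = lam ^ p / lam := by
      rw [Real.rpow_sub hlam, Real.rpow_one]
    rw [h4]
    field_simp
    linarith [h3]
  -- forward pass
  have hF : ∀ l, 1 ≤ l → l ≤ L → ∀ i, h l i = A l * ht l i := by
    intro l hl
    induction l, hl using Nat.le_induction with
    | base =>
      intro _ i
      simp only [hh1, hht1, A1, hω1]
    | succ l hl ih =>
      intro hlL i
      have hlL' : l ≤ L := by omega
      have h2l : 2 ≤ l + 1 := by omega
      have hx' : ∀ j, x l j = (A l) ^ p * xt l j := by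
        intro j
        simp only [hx l hl hlL', hxt l hl hlL']
        rw [ih hlL' j, hhom (A l) (Apos l) (ht l j)]
      simp only [hh (l+1) h2l hlL, hht (l+1) h2l hlL, Nat.add_sub_cancel,
        Matrix.mulVec, dotProduct]
      have hsum : ∑ j, U (l+1) i j * x l j = (A l) ^ p * ∑ j, U (l+1) i j * xt l j := by
        rw [Finset.mul_sum]
        refine Finset.sum_congr rfl fun j _ => ?_
        rw [hx' j]; ring
      rw [hsum, Arec, hscale (l+1) h2l]
      ring
  have xF : ∀ l, 1 ≤ l → l ≤ L → ∀ i, x l i = (A l) ^ p * xt l i := by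
    intro l hl hlL i
    simp only [hx l hl hlL, hxt l hl hlL]
    rw [hF l hl hlL i, hhom (A l) (Apos l) (ht l i)]
  -- backward pass
  have dhF : ∀ l, 1 ≤ l → l ≤ L →
      (∀ i, dx l i = (m:ℝ) ^ (-(a (L+1))) * ((A L) ^ p / (A l) ^ p) * dxt l i) →
      ∀ i, dh l i = (m:ℝ) ^ (-(a (L+1))) * ((A L) ^ p / A l) * dht l i := by
    intro l hl hlL hC i
    simp only [hdh l hl hlL, hdht l hl hlL]
    rw [hC i, hF l hl hlL i, hderiv (A l) (Apos l) (ht l i)]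
    have key : (A l) ^ p = (A l) ^ (p - 1) * A l := by
      nth_rewrite 1 [show p = (p - 1) + 1 by ring]
      rw [Real.rpow_add (Apos l), Real.rpow_one]
    rw [key]
    have n1 : (A l : ℝ) ≠ 0 := (Apos l).ne'
    have n2 : (A l : ℝ) ^ (p - 1) ≠ 0 := (Real.rpow_pos_of_pos (Apos l) _).ne'
    field_simp
  have dxF : ∀ t l, 1 ≤ l → l ≤ L → L - l = t →
      ∀ i, dx l i = (m:ℝ) ^ (-(a (L+1))) * ((A L) ^ p / (A l) ^ p) * dxt l i := by
    intro t
    induction t with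
    | zero =>
      intro l hl hlL ht0 i
      have hlL' : l = L := by omega
      subst hlL'
      simp only [hdxL, hdxtL]
      rw [div_self (Real.rpow_pos_of_pos (Apos l) p).ne', mul_one]
    | succ t ih =>
      intro l hl hlL hts i
      have hl1 : l + 1 ≤ L := by omega
      have h2 : 2 ≤ l + 1 := by omega
      have hdh1 := dhF (l+1) (by omega) hl1 (ih (l+1) (by omega) hl1 (by omega))
      have e1 := hdx (l+1) h2 hl1
      have e2 := hdxt (l+1) h2 hl1
      rw [Nat.add_sub_cancel] at e1 e2
      simp only [e1, e2]
      rw [Finset.mul_sum]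
      refine Finset.sum_congr rfl fun k _ => ?_
      rw [hdh1 k, hscale (l+1) h2, Arec]
      have n1 : ((A l) ^ p : ℝ) ≠ 0 := (Real.rpow_pos_of_pos (Apos l) _).ne'
      have n2 : ω (l+1) ≠ 0 := (ωpos (l+1) (by omega)).ne'
      field_simp
  have dxFin : ∀ l, 1 ≤ l → l ≤ L →
      ∀ i, dx l i = (m:ℝ) ^ (-(a (L+1))) * ((A L) ^ p / (A l) ^ p) * dxt l i :=
    fun l hl hlL => dxF (L - l) l hl hlL rfl
  have dhFin : ∀ l, 1 ≤ l → l ≤ L →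
      ∀ i, dh l i = (m:ℝ) ^ (-(a (L+1))) * ((A L) ^ p / A l) * dht l i :=
    fun l hl hlL => dhF l hl hlL (dxFin l hl hlL)
  have hsplit : (∏ k ∈ Icc 1 L, ω k ^ (p ^ (L - k + 1)))
      = ω 1 ^ (p ^ L) * ∏ k ∈ Icc 2 L, ω k ^ (p ^ (L - k + 1)) := by
    have hins : Icc 1 L = insert 1 (Icc 2 L) := by
      ext k
      simp only [Finset.mem_Icc, Finset.mem_insert]
      omega
    rw [hins, Finset.prod_insert (by simp), show L - 1 + 1 = L by omega]
  have nω1 : ω 1 ≠ 0 := (ωpos 1 le_rfl).ne'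
  refine ⟨?_, ?_, ?_, ?_⟩
  · intro i j
    rw [hΔW1 i j, dhFin 1 le_rfl hL i, A1, Ap, hsplit,
      show (-(a (L+1) + 2*a 1 + c 1) : ℝ) = -(a (L+1)) + -(2*a 1 + c 1) by ring,
      Real.rpow_add hm', Real.rpow_sub (ωpos 1 le_rfl), Real.rpow_one]
    generalize (∏ k ∈ Icc 2 L, ω k ^ (p ^ (L - k + 1))) = P
    field_simp
  · intro i
    rw [hΔB1 i, dhFin 1 le_rfl hL i, A1, Ap, hsplit,
      show (-(a (L+1) + 2*a 1 + c 1) : ℝ) = -(a (L+1)) + -(2*a 1 + c 1) by ring,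
      Real.rpow_add hm', Real.rpow_sub (ωpos 1 le_rfl), Real.rpow_one]
    generalize (∏ k ∈ Icc 2 L, ω k ^ (p ^ (L - k + 1))) = P
    field_simp
  · intro l h2l hlL i j
    have hl1 : 1 ≤ l - 1 := by omega
    have hl1L : l - 1 ≤ L := by omega
    have hlge1 : 1 ≤ l := by omega
    rw [hΔW l h2l hlL i j, dhFin l hlge1 hlL i, xF (l-1) hl1 hl1L j, ← Ap]
    have hAl : A l = ω l * (A (l-1)) ^ p := by
      have := Arec (l-1)
      rwa [show l - 1 + 1 = l by omega] at this
    rw [hAl,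
      show (-(a (L+1) + 2 * a l + c l - 1) : ℝ)
        = -(a (L+1)) + -(2*a l + c l) + 1 by ring,
      Real.rpow_add hm', Real.rpow_add hm', Real.rpow_one]
    have n1 : ((A (l-1)) ^ p : ℝ) ≠ 0 := (Real.rpow_pos_of_pos (Apos _) _).ne'
    have n2 : ω l ≠ 0 := (ωpos l hlge1).ne'
    field_simp
  · intro i
    rw [hΔWL1 i, xF L hL le_rfl i, ← Ap,
      show (-(2 * a (L+1) + c (L+1) - 1) : ℝ) = -(2*a (L+1) + c (L+1)) + 1 by ring,
      Real.rpow_add hm', Real.rpow_one]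
    field_simp
end

section
/- Consider an integrable parameterization (a₁ = 0, a_l = 1 for 2 ≤ l ≤ L+1) of an L-hidden-layer network with no biases except at the first layer and a positively p-homogeneous activation σ with p ≥ 1. The first SGD updates of the effective weights satisfy: ΔW¹(1) = −η χ₀ m^{−(c₁ − γ₁(p))} dh̃¹ ξ₀ᵀ; ΔB¹(1) = −η χ₀ m^{−(c₁ − γ₁(p))} dh̃¹; ΔW^l(1) = −η χ₀ m^{−(c_l − γ_l(p))} (dh̃^l (x̃^{l−1})ᵀ)/m for 2 ≤ l ≤ L; and ΔW^{L+1}(1) = −η χ₀ m^{−(c_{L+1} − γ_{L+1}(p))} x̃^L/m, where γ₁(p) = γ_{L+1}(p) = −(1/2)(1 + Σ_{k=0}^{L−1} p^k) and γ_l(p) = −1 − (1/2)Σ_{k=0}^{L−1} p^k for 2 ≤ l ≤ L. -/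
open Finset

noncomputable def Eg (p : ℝ) (l : ℕ) : ℝ := -(1/2) * ∑ k ∈ Finset.range (l-1), p ^ k
noncomputable def Gg (p : ℝ) (L l : ℕ) : ℝ := -1 - (1/2) * ∑ k ∈ Finset.Ico l L, p ^ k

lemma Eg_one (p : ℝ) : Eg p 1 = 0 := by simp [Eg]

lemma Eg_succ (p : ℝ) {l : ℕ} (hl : 1 ≤ l) : Eg p (l+1) = p * Eg p l - 1/2 := by
  obtain ⟨n, rfl⟩ := Nat.exists_eq_add_of_le hl
  have h1 : 1 + n + 1 - 1 = n + 1 := by omega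
  have h2 : 1 + n - 1 = n := by omega
  rw [Eg, Eg, h1, h2, geom_sum_succ]
  ring

lemma pEg (p : ℝ) {l : ℕ} (hl : 1 ≤ l) :
    p * Eg p l = -(1/2) * ∑ k ∈ Finset.Ico 1 l, p ^ k := by
  have h : ∑ k ∈ Finset.Ico 1 l, p ^ k = p * ∑ k ∈ Finset.range (l-1), p ^ k := by
    rw [Finset.sum_Ico_eq_sum_range, Finset.mul_sum]
    apply Finset.sum_congr rfl
    intro i _
    rw [pow_add, pow_one]
  rw [Eg, h]; ring

lemma Gg_L (p : ℝ) (L : ℕ) : Gg p L L = -1 := by simp [Gg]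

lemma GE_rec (p : ℝ) {l L : ℕ} (hl1 : 1 ≤ l) (hl : l < L) :
    Gg p L l = -1/2 + Gg p L (l+1) + (p-1) * Eg p (l+1) := by
  have h1 : (p - 1) * Eg p (l+1) = -(1/2) * (p ^ l - 1) := by
    have h2 : l + 1 - 1 = l := by omega
    rw [Eg, h2, ← geom_sum_mul]
    ring
  rw [Gg, Gg, Finset.sum_eq_sum_Ico_succ_bot hl, h1]
  ring

lemma range_split (p : ℝ) {L : ℕ} (hL : 1 ≤ L) :
    ∑ k ∈ Finset.range L, p ^ k = 1 + ∑ k ∈ Finset.Ico 1 L, p ^ k := by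
  rw [Finset.range_eq_Ico, Finset.sum_eq_sum_Ico_succ_bot hL]
  simp

lemma homM {m : ℕ} (hm : 0 < m) {p : ℝ} {σ : ℝ → ℝ}
    (hhom : ∀ lam : ℝ, 0 < lam → ∀ z : ℝ, σ (lam * z) = lam ^ p * σ z)
    (r z : ℝ) : σ ((m:ℝ)^r * z) = (m:ℝ)^(p*r) * σ z := by
  have hM : (0:ℝ) < (m:ℝ) := by exact_mod_cast hm
  rw [hhom _ (Real.rpow_pos_of_pos hM r) z, ← Real.rpow_mul hM.le, mul_comm r p]

lemma derivM {m : ℕ} (hm : 0 < m) {p : ℝ} {σ : ℝ → ℝ} (hdiff : Differentiable ℝ σ)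
    (hhom : ∀ lam : ℝ, 0 < lam → ∀ z : ℝ, σ (lam * z) = lam ^ p * σ z)
    (r z : ℝ) : deriv σ ((m:ℝ)^r * z) = (m:ℝ)^((p-1)*r) * deriv σ z := by
  have hM : (0:ℝ) < (m:ℝ) := by exact_mod_cast hm
  set lam := (m:ℝ)^r with hlam
  have hlp : 0 < lam := Real.rpow_pos_of_pos hM r
  have h1 : HasDerivAt (fun z => σ (lam * z)) (deriv σ (lam * z) * lam) z := by
    have hσ : HasDerivAt σ (deriv σ (lam * z)) (lam * z) := (hdiff (lam*z)).hasDerivAt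
    have hlin : HasDerivAt (fun z : ℝ => lam * z) lam z := by
      simpa using (hasDerivAt_id z).const_mul lam
    exact hσ.comp z hlin
  have h2 : HasDerivAt (fun z => σ (lam * z)) (lam ^ p * deriv σ z) z := by
    have hfun : (fun z => σ (lam * z)) = fun z => lam ^ p * σ z := funext (hhom lam hlp)
    rw [hfun]
    exact ((hdiff z).hasDerivAt).const_mul _
  have heq : deriv σ (lam * z) * lam = lam ^ p * deriv σ z := h1.unique h2
  have hln : lam ≠ 0 := ne_of_gt hlp
  have key : deriv σ (lam * z) = lam ^ (p-1) * deriv σ z := by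
    have : lam ^ (p-1) = lam ^ p / lam := by
      rw [Real.rpow_sub hlp, Real.rpow_one]
    rw [this]
    field_simp
    linarith [heq]
  rw [key, hlam, ← Real.rpow_mul hM.le, mul_comm r (p-1)]

/-- first weight updates of an integrable parameterization.
For the integrable parameterization (`a₁ = 0`, `a_l = 1` for `2 ≤ l ≤ L+1`, so
`W¹(0) = U¹`, `W^l(0) = m⁻¹U^l`) with positively `p`-homogeneous activation (`p ≥ 1`), the
first SGD updates of the effective weights are given in terms of the scaleless (tilde)
variables by `ΔW¹(1) = −η χ₀ m^{−(c₁−γ₁(p))} dh̃¹ ξ₀ᵀ`, etc., with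
`γ₁(p) = γ_{L+1}(p) = −(1/2)(1 + Σ_{k=0}^{L−1} p^k)` and
`γ_l(p) = −1 − (1/2) Σ_{k=0}^{L−1} p^k` for `2 ≤ l ≤ L`. -/
theorem stmt_15 (m d L : ℕ) (hm : 0 < m) (hL : 1 ≤ L)
    (p : ℝ) (hp : 1 ≤ p) (σ : ℝ → ℝ) (hdiff : Differentiable ℝ σ)
    (hhom : ∀ lam : ℝ, 0 < lam → ∀ z : ℝ, σ (lam * z) = lam ^ p * σ z)
    (ξ₀ : Fin d → ℝ) (y₀ : ℝ)
    (U1 : Matrix (Fin m) (Fin d) ℝ) (U : ℕ → Matrix (Fin m) (Fin m) ℝ)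
    (UL1 v1 : Fin m → ℝ)
    (c : ℕ → ℝ)
    (h x ht xt dx dh dxt dht : ℕ → Fin m → ℝ)
    -- forward pass of the integrable parameterization at initialization
    (hh1 : h 1 = fun i => U1.mulVec ξ₀ i + v1 i)
    (hx : ∀ l, 1 ≤ l → l ≤ L → x l = fun i => σ (h l i))
    (hh : ∀ l, 2 ≤ l → l ≤ L →
      h l = fun i => (m : ℝ)⁻¹ * (U l).mulVec (x (l - 1)) i)
    -- scaleless (tilde) forward pass
    (hht1 : ht 1 = fun i => U1.mulVec ξ₀ i + v1 i)
    (hxt : ∀ l, 1 ≤ l → l ≤ L → xt l = fun i => σ (ht l i))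
    (hht : ∀ l, 2 ≤ l → l ≤ L →
      ht l = fun i => (m : ℝ) ^ (-(1 : ℝ) / 2) * (U l).mulVec (xt (l - 1)) i)
    -- backward pass
    (hdxL : dx L = fun i => (m : ℝ)⁻¹ * UL1 i)
    (hdh : ∀ l, 1 ≤ l → l ≤ L → dh l = fun i => dx l i * deriv σ (h l i))
    (hdx : ∀ l, 2 ≤ l → l ≤ L →
      dx (l - 1) = fun j => ∑ i, (m : ℝ)⁻¹ * U l i j * dh l i)
    -- scaleless (tilde) backward pass
    (hdxtL : dxt L = UL1)
    (hdht : ∀ l, 1 ≤ l → l ≤ L → dht l = fun i => dxt l i * deriv σ (ht l i))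
    (hdxt : ∀ l, 2 ≤ l → l ≤ L →
      dxt (l - 1) = fun j => ∑ i, (m : ℝ) ^ (-(1 : ℝ) / 2) * U l i j * dht l i)
    -- loss, output, χ₀ and the first SGD updates of the effective weights
    (loss : ℝ → ℝ → ℝ) (hloss : ∀ y, Differentiable ℝ (loss y))
    (η : ℝ) (hη : 0 < η)
    (f0 : ℝ) (hf0 : f0 = (m : ℝ)⁻¹ * ∑ i, UL1 i * x L i)
    (χ₀ : ℝ) (hχ₀ : χ₀ = deriv (loss y₀) f0)
    (ΔW1 : Matrix (Fin m) (Fin d) ℝ) (ΔB1 : Fin m → ℝ)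
    (ΔW : ℕ → Matrix (Fin m) (Fin m) ℝ) (ΔWL1 : Fin m → ℝ)
    (hΔW1 : ∀ i j, ΔW1 i j = -η * (m : ℝ) ^ (-(c 1)) * χ₀ * dh 1 i * ξ₀ j)
    (hΔB1 : ∀ i, ΔB1 i = -η * (m : ℝ) ^ (-(c 1)) * χ₀ * dh 1 i)
    (hΔW : ∀ l, 2 ≤ l → l ≤ L → ∀ i j,
      ΔW l i j = -η * (m : ℝ) ^ (-(2 + c l)) * χ₀ * dh l i * x (l - 1) j)
    (hΔWL1 : ∀ i, ΔWL1 i = -η * (m : ℝ) ^ (-(2 + c (L + 1))) * χ₀ * x L i)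
    -- the exponents γ₁(p) and γ_l(p), 2 ≤ l ≤ L
    (γ1 γmid : ℝ)
    (hγ1 : γ1 = -(1 / 2) * (1 + ∑ k ∈ range L, p ^ k))
    (hγmid : γmid = -1 - (1 / 2) * ∑ k ∈ range L, p ^ k) :
    (∀ i j, ΔW1 i j = -η * χ₀ * (m : ℝ) ^ (-(c 1 - γ1)) * dht 1 i * ξ₀ j) ∧
      (∀ i, ΔB1 i = -η * χ₀ * (m : ℝ) ^ (-(c 1 - γ1)) * dht 1 i) ∧
      (∀ l, 2 ≤ l → l ≤ L → ∀ i j,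
        ΔW l i j = -η * χ₀ * (m : ℝ) ^ (-(c l - γmid)) * (dht l i * xt (l - 1) j) / m) ∧
      ∀ i, ΔWL1 i = -η * χ₀ * (m : ℝ) ^ (-(c (L + 1) - γ1)) * xt L i / m := by
  
  have hM : (0:ℝ) < (m:ℝ) := by exact_mod_cast hm
  have hm0 : (m:ℝ) ≠ 0 := ne_of_gt hM
  -- forward pass relation
  have fwd : ∀ l, 1 ≤ l → l ≤ L →
      (h l = fun i => (m:ℝ)^(Eg p l) * ht l i) ∧
      (x l = fun i => (m:ℝ)^(p * Eg p l) * xt l i) := by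
    intro l hl
    induction l, hl using Nat.le_induction with
    | base =>
      intro h1L
      have hh' : h 1 = ht 1 := by rw [hh1, hht1]
      constructor
      · funext i
        simp [hh', Eg_one]
      · funext i
        simp only [hx 1 le_rfl h1L, hxt 1 le_rfl h1L, hh', Eg_one, mul_zero,
          Real.rpow_zero, one_mul]
    | succ l hl ih =>
      intro hsL
      have hlL : l ≤ L := by omega
      obtain ⟨ihh, ihx⟩ := ih hlL
      have hxsmul : x l = ((m:ℝ)^(p * Eg p l)) • xt l := by
        funext j
        simp [ihx]
      have hErec := Eg_succ p hl
      have hhs : h (l+1) = fun i => (m:ℝ)^(Eg p (l+1)) * ht (l+1) i := by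
        funext i
        simp only [hh (l+1) (by omega) hsL, hht (l+1) (by omega) hsL,
          Nat.add_sub_cancel, hxsmul, Matrix.mulVec_smul, Pi.smul_apply, smul_eq_mul]
        have e1 : (m:ℝ)⁻¹ * ((m:ℝ)^(p * Eg p l) * (U (l+1)).mulVec (xt l) i)
            = (m:ℝ)^((-1:ℝ) + p * Eg p l) * (U (l+1)).mulVec (xt l) i := by
          rw [Real.rpow_add hM, Real.rpow_neg_one]; ring
        have e2 : (m:ℝ)^(Eg p (l+1)) * ((m:ℝ)^(-(1:ℝ)/2) * (U (l+1)).mulVec (xt l) i)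
            = (m:ℝ)^(Eg p (l+1) + (-(1:ℝ)/2)) * (U (l+1)).mulVec (xt l) i := by
          rw [Real.rpow_add hM]; ring
        rw [e1, e2]
        congr 1
        rw [hErec]; ring
      refine ⟨hhs, ?_⟩
      funext i
      simp only [hx (l+1) (by omega) hsL, hxt (l+1) (by omega) hsL, hhs]
      exact homM hm hhom (Eg p (l+1)) (ht (l+1) i)
  -- relation dh from dx
  have dh_of_dx : ∀ l, 1 ≤ l → l ≤ L →
      dx l = (fun i => (m:ℝ)^(Gg p L l) * dxt l i) →
      dh l = fun i => (m:ℝ)^(Gg p L l + (p-1) * Eg p l) * dht l i := by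
    intro l h1 h2 hrel
    funext i
    simp only [hdh l h1 h2, hdht l h1 h2, hrel, (fwd l h1 h2).1]
    rw [derivM hm hdiff hhom, Real.rpow_add hM]
    ring
  -- backward pass relation
  have back : ∀ k l, 1 ≤ l → l + k = L →
      dx l = fun i => (m:ℝ)^(Gg p L l) * dxt l i := by
    intro k
    induction k with
    | zero =>
      intro l h1 h2
      simp only [Nat.add_zero] at h2
      subst h2
      funext i
      simp only [hdxL, hdxtL, Gg_L, Real.rpow_neg_one]
    | succ k ih =>
      intro l h1 h2
      have hl1 : l + 1 ≤ L := by omega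
      have ihdx := ih (l+1) (by omega) (by omega)
      have ihdh := dh_of_dx (l+1) (by omega) hl1 ihdx
      funext j
      have hdx' := hdx (l+1) (by omega) hl1
      have hdxt' := hdxt (l+1) (by omega) hl1
      simp only [Nat.add_sub_cancel] at hdx' hdxt'
      simp only [hdx', hdxt', ihdh, Finset.mul_sum]
      apply Finset.sum_congr rfl
      intro i _
      have e1 : (m:ℝ)^(-1:ℝ) * U (l+1) i j *
            ((m:ℝ)^(Gg p L (l+1) + (p-1) * Eg p (l+1)) * dht (l+1) i)
          = ((m:ℝ)^(-1:ℝ) * (m:ℝ)^(Gg p L (l+1) + (p-1) * Eg p (l+1))) *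
            (U (l+1) i j * dht (l+1) i) := by ring
      have e2 : (m:ℝ)^(Gg p L l) * ((m:ℝ)^(-(1:ℝ)/2) * U (l+1) i j * dht (l+1) i)
          = ((m:ℝ)^(Gg p L l) * (m:ℝ)^(-(1:ℝ)/2)) * (U (l+1) i j * dht (l+1) i) := by
        ring
      rw [show (m:ℝ)⁻¹ = (m:ℝ)^(-1:ℝ) from (Real.rpow_neg_one _).symm, e1, e2,
        ← Real.rpow_add hM, ← Real.rpow_add hM]
      congr 1
      rw [GE_rec p h1 (by omega : l < L)]; ring
  have hdx_all : ∀ l, 1 ≤ l → l ≤ L →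
      dx l = fun i => (m:ℝ)^(Gg p L l) * dxt l i :=
    fun l h1 h2 => back (L - l) l h1 (by omega)
  have hdh_all : ∀ l, 1 ≤ l → l ≤ L →
      dh l = fun i => (m:ℝ)^(Gg p L l + (p-1) * Eg p l) * dht l i :=
    fun l h1 h2 => dh_of_dx l h1 h2 (hdx_all l h1 h2)
  have hγ1' : Gg p L 1 + (p-1) * Eg p 1 = γ1 := by
    rw [Eg_one, mul_zero, add_zero, Gg, hγ1, range_split p hL]
    ring
  refine ⟨?_, ?_, ?_, ?_⟩
  · intro i j
    rw [hΔW1 i j]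
    simp only [hdh_all 1 le_rfl hL]
    have hpow : (m:ℝ)^(-(c 1 - γ1))
        = (m:ℝ)^(-(c 1)) * (m:ℝ)^(Gg p L 1 + (p-1) * Eg p 1) := by
      rw [← Real.rpow_add hM]
      congr 1
      linarith [hγ1']
    rw [hpow]; ring
  · intro i
    rw [hΔB1 i]
    simp only [hdh_all 1 le_rfl hL]
    have hpow : (m:ℝ)^(-(c 1 - γ1))
        = (m:ℝ)^(-(c 1)) * (m:ℝ)^(Gg p L 1 + (p-1) * Eg p 1) := by
      rw [← Real.rpow_add hM]
      congr 1
      linarith [hγ1']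
    rw [hpow]; ring
  · intro l h2 hlL i j
    rw [hΔW l h2 hlL i j]
    simp only [hdh_all l (by omega) hlL, (fwd (l-1) (by omega) (by omega)).2]
    have hfm : Gg p L l + p * Eg p l = 1/2 + γmid := by
      rw [pEg p (by omega : 1 ≤ l), Gg, hγmid]
      have hsp := Finset.sum_Ico_consecutive (fun k => p ^ k)
        (by omega : 1 ≤ l) (hlL)
      rw [range_split p hL]
      linarith [hsp]
    have hpE : p * Eg p (l-1) = Eg p l + 1/2 := by
      have := Eg_succ p (by omega : 1 ≤ l - 1)
      have hll : l - 1 + 1 = l := by omega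
      rw [hll] at this
      linarith [this]
    have hexp : -(c l - γmid) = -(2 + c l) + (Gg p L l + (p-1) * Eg p l)
        + p * Eg p (l-1) + 1 := by
      rw [hpE]
      linarith [hfm]
    have hpow : (m:ℝ)^(-(c l - γmid))
        = (m:ℝ)^(-(2 + c l)) * (m:ℝ)^(Gg p L l + (p-1) * Eg p l)
          * (m:ℝ)^(p * Eg p (l-1)) * (m:ℝ) := by
      have h1 : (m:ℝ)^(-(2 + c l)) * (m:ℝ)^(Gg p L l + (p-1) * Eg p l)
          * (m:ℝ)^(p * Eg p (l-1)) * (m:ℝ)^(1:ℝ) = (m:ℝ)^(-(c l - γmid)) := by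
        rw [← Real.rpow_add hM, ← Real.rpow_add hM, ← Real.rpow_add hM]
        congr 1
        linarith [hexp]
      rw [Real.rpow_one] at h1
      exact h1.symm
    rw [hpow, eq_div_iff hm0]
    ring
  · intro i
    rw [hΔWL1 i]
    simp only [(fwd L hL le_rfl).2]
    have hpEL : p * Eg p L = 1 + γ1 := by
      rw [pEg p hL, hγ1, range_split p hL]
      ring
    have hpow : (m:ℝ)^(-(c (L+1) - γ1))
        = (m:ℝ)^(-(2 + c (L+1))) * (m:ℝ)^(p * Eg p L) * (m:ℝ) := by
      have h1 : (m:ℝ)^(-(2 + c (L+1))) * (m:ℝ)^(p * Eg p L) * (m:ℝ)^(1:ℝ)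
          = (m:ℝ)^(-(c (L+1) - γ1)) := by
        rw [← Real.rpow_add hM, ← Real.rpow_add hM]
        congr 1
        linarith [hpEL]
      rw [Real.rpow_one] at h1
      exact h1.symm
    rw [hpow, eq_div_iff hm0]
    ring
end

section
/- Consider, at finite width m, the IP-LLR and the hybrid HP parameterizations of an L-hidden-layer network with a positively p-homogeneous activation σ (p ≥ 1), no biases except at the first layer, the same initial Gaussian-free data (the same matrices U¹, …, U^{L+1} and bias v¹), the same sequence of training samples (ξ₀, y₀), (ξ₁, y₁), …, and the same loss ℓ differentiable in its second argument. Assume χ₀^{HP} := ∂₂ℓ(y₀, f₀^{HP}(ξ₀)) ≠ 0, let η > 0 be the base learning rate of IP-LLR, and train HP with base learning rate η_{HP}(0) = (χ₀^{IP}/χ₀^{HP}) η at step 0 and η_{HP}(s) = η for every step s ≥ 1, where χ₀^{IP} := ∂₂ℓ(y₀, f₀^{IP}(ξ₀)). Then for every t ≥ 1 and every input ξ ∈ ℝ^d, f_t^{HP}(ξ) = f_t^{IP}(ξ). -/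
/-- The weights of an `L`-hidden-layer fully-connected network of width `m` on inputs of
dimension `d`: first-layer (effective) weight matrix and bias, intermediate-layer (effective)
weight matrices indexed by the layer `l` (only `2 ≤ l ≤ L` is relevant), and last-layer
(effective) weight vector. -/
structure NetW (m d : ℕ) where
  W1 : Matrix (Fin m) (Fin d) ℝ
  B1 : Fin m → ℝ
  Wmid : ℕ → Matrix (Fin m) (Fin m) ℝ
  Wlast : Fin m → ℝ

/-- Pre-activations of the forward pass: `h¹ = W¹ξ + B¹`, `h^l = W^l σ(h^{l−1})` for
`l ≥ 2`. -/
noncomputable def fwd {m d : ℕ} (σ : ℝ → ℝ) (net : NetW m d) (ξ : Fin d → ℝ) :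
    ℕ → Fin m → ℝ
  | 0 => fun _ => 0
  | 1 => fun i => net.W1.mulVec ξ i + net.B1 i
  | (l + 2) => fun i => (net.Wmid (l + 2)).mulVec (fun j => σ (fwd σ net ξ (l + 1) j)) i

/-- `bwd σ L net ξ k` is the gradient `dx^{L−k}` of the output with respect to `x^{L−k}`:
`dx^L = W^{L+1}` and `dx^{l−1} = (W^l)ᵀ (dx^l ⊙ σ'(h^l))`. -/
noncomputable def bwd {m d : ℕ} (σ : ℝ → ℝ) (L : ℕ) (net : NetW m d) (ξ : Fin d → ℝ) :
    ℕ → Fin m → ℝ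
  | 0 => net.Wlast
  | (k + 1) => fun j =>
      ∑ i, net.Wmid (L - k) i j * (bwd σ L net ξ k i * deriv σ (fwd σ net ξ (L - k) i))

/-- `dh^l = dx^l ⊙ σ'(h^l)`, the gradient of the output with respect to `h^l`. -/
noncomputable def dhv {m d : ℕ} (σ : ℝ → ℝ) (L : ℕ) (net : NetW m d) (ξ : Fin d → ℝ)
    (l : ℕ) : Fin m → ℝ :=
  fun i => bwd σ L net ξ (L - l) i * deriv σ (fwd σ net ξ l i)

/-- Output of the network: `f(ξ) = (W^{L+1})ᵀ x^L`. -/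
noncomputable def outN {m d : ℕ} (σ : ℝ → ℝ) (L : ℕ) (net : NetW m d) (ξ : Fin d → ℝ) : ℝ :=
  ∑ i, net.Wlast i * σ (fwd σ net ξ L i)

/-- One SGD step on the effective weights with base learning rate `η`, exponents
`e l = 2a_l + c_l` (so the update of layer `l` is scaled by `m^{−e_l}`), training sample
`(ξt, yt)` and loss `loss`; `χ = ∂₂ loss (yt, f(ξt))`. -/
noncomputable def sgdStep {m d : ℕ} (σ : ℝ → ℝ) (L : ℕ) (loss : ℝ → ℝ → ℝ) (η : ℝ)
    (e : ℕ → ℝ) (ξt : Fin d → ℝ) (yt : ℝ) (net : NetW m d) : NetW m d :=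
  let χ := deriv (loss yt) (outN σ L net ξt)
  { W1 := Matrix.of fun i j =>
      net.W1 i j - η * (m : ℝ) ^ (-(e 1)) * χ * dhv σ L net ξt 1 i * ξt j
    B1 := fun i => net.B1 i - η * (m : ℝ) ^ (-(e 1)) * χ * dhv σ L net ξt 1 i
    Wmid := fun l => Matrix.of fun i j =>
      net.Wmid l i j - η * (m : ℝ) ^ (-(e l)) * χ * dhv σ L net ξt l i *
        σ (fwd σ net ξt (l - 1) j)
    Wlast := fun i =>
      net.Wlast i - η * (m : ℝ) ^ (-(e (L + 1))) * χ * σ (fwd σ net ξt L i) }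

/-! ### Auxiliary lemmas -/

private lemma deriv_comp_const_mul_aux (f : ℝ → ℝ) (a : ℝ) (ha : a ≠ 0) (x : ℝ) :
    deriv (fun y => f (a * y)) x = a * deriv f (a * x) := by
  by_cases h : DifferentiableAt ℝ f (a * x)
  · have h1 : HasDerivAt (fun y : ℝ => a * y) a x := by
      simpa using (hasDerivAt_id x).const_mul a
    have h2 := (h.hasDerivAt.comp x h1).deriv
    exact h2.trans (mul_comm _ _)
  · have h2 : ¬ DifferentiableAt ℝ (fun y => f (a * y)) x := by
      intro hc
      apply h
      have h3 : DifferentiableAt ℝ (fun z : ℝ => a⁻¹ * z) (a * x) :=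
        differentiableAt_id.const_mul _
      have h4 : DifferentiableAt ℝ ((fun y => f (a * y)) ∘ fun z : ℝ => a⁻¹ * z) (a * x) := by
        refine DifferentiableAt.comp _ ?_ h3
        show DifferentiableAt ℝ (fun y => f (a * y)) (a⁻¹ * (a * x))
        rw [inv_mul_cancel_left₀ ha]; exact hc
      have h5 : ((fun y => f (a * y)) ∘ fun z : ℝ => a⁻¹ * z) = f := by
        funext z; simp [Function.comp, mul_inv_cancel_left₀ ha]
      rwa [h5] at h4
    rw [deriv_zero_of_not_differentiableAt h, deriv_zero_of_not_differentiableAt h2, mul_zero]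

private lemma deriv_phom {σ : ℝ → ℝ} {p : ℝ}
    (hhom : ∀ lam : ℝ, 0 < lam → ∀ z : ℝ, σ (lam * z) = lam ^ p * σ z)
    {lam : ℝ} (hlam : 0 < lam) (z : ℝ) :
    deriv σ (lam * z) = lam ^ (p - 1) * deriv σ z := by
  have hne : lam ≠ 0 := ne_of_gt hlam
  have hσ : σ = fun w => lam ^ p * σ (lam⁻¹ * w) := by
    funext w
    have h := hhom lam hlam (lam⁻¹ * w)
    rwa [mul_inv_cancel_left₀ hne] at h
  conv_lhs => rw [hσ]
  rw [deriv_const_mul_field, deriv_comp_const_mul_aux σ lam⁻¹ (inv_ne_zero hne) (lam * z),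
    inv_mul_cancel_left₀ hne]
  have hpow : lam ^ p * lam⁻¹ = lam ^ (p - 1) := by
    rw [show lam⁻¹ = lam ^ (-1 : ℝ) by simp [Real.rpow_neg hlam.le], ← Real.rpow_add hlam]
    congr 1
    try ring
  calc lam ^ p * (lam⁻¹ * deriv σ z) = (lam ^ p * lam⁻¹) * deriv σ z := by ring
    _ = lam ^ (p - 1) * deriv σ z := by rw [hpow]

/-- `alE p l` is the exponent `α_l` with `h^l_IP = m^{−α_l} h^l_HP` at initialization. -/
private noncomputable def alE (p : ℝ) : ℕ → ℝ
  | 0 => 0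
  | 1 => 0
  | l + 2 => 1 / 2 + p * alE p (l + 1)

/-- `blE p L k` is the exponent `β` with `dx^{L−k}_IP = m^{−β} dx^{L−k}_HP` at init. -/
private noncomputable def blE (p : ℝ) (L : ℕ) : ℕ → ℝ
  | 0 => 0
  | k + 1 => 1 / 2 + (p - 1) * alE p (L - k) + blE p L k

private lemma alE_succ (p : ℝ) : ∀ l : ℕ, 1 ≤ l → alE p (l + 1) = 1 / 2 + p * alE p l
  | 0, h => absurd h (by omega)
  | l + 1, _ => by
    show alE p (l + 2) = 1 / 2 + p * alE p (l + 1)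
    simp [alE]

private lemma alE_closed (p : ℝ) : ∀ l : ℕ, alE p (l + 1) = 1 / 2 * ∑ k ∈ Finset.range l, p ^ k
  | 0 => by simp [alE]
  | l + 1 => by
    have h : alE p (l + 2) = 1 / 2 + p * alE p (l + 1) := by simp [alE]
    rw [show l + 1 + 1 = l + 2 from rfl, h, alE_closed p l, geom_sum_succ]
    ring

private lemma blE_eq (p : ℝ) (L : ℕ) :
    ∀ k l : ℕ, k + l = L → 1 ≤ l → blE p L k = alE p (L + 1) - alE p (l + 1)
  | 0, l, h, _ => by
    have : l = L := by omega
    subst this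
    simp [blE]
  | k + 1, l, h, hl => by
    have hLk : L - k = l + 1 := by omega
    have hb : blE p L (k + 1) = 1 / 2 + (p - 1) * alE p (L - k) + blE p L k := by simp [blE]
    rw [hb, hLk, blE_eq p L k (l + 1) (by omega) (by omega),
      alE_succ p (l + 1) (by omega)]
    ring

section scale

variable {m d L : ℕ} {p : ℝ} {σ : ℝ → ℝ} {A B : NetW m d} {ξ : Fin d → ℝ}

private lemma fwd_scale (hm : 0 < (m : ℝ))
    (hhom : ∀ lam : ℝ, 0 < lam → ∀ z : ℝ, σ (lam * z) = lam ^ p * σ z)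
    (hW1 : A.W1 = B.W1) (hB1 : A.B1 = B.B1)
    (hWmid : ∀ l i j, A.Wmid l i j = (m : ℝ) ^ (-(1 : ℝ) / 2) * B.Wmid l i j) :
    ∀ l i, fwd σ A ξ l i = (m : ℝ) ^ (-(alE p l)) * fwd σ B ξ l i
  | 0, i => by simp [fwd, alE]
  | 1, i => by simp [fwd, alE, hW1, hB1]
  | l + 2, i => by
    have hpos : (0 : ℝ) < (m : ℝ) ^ (-(alE p (l + 1))) := Real.rpow_pos_of_pos hm _
    have key : (m : ℝ) ^ (-(1 : ℝ) / 2) * ((m : ℝ) ^ (-(alE p (l + 1)))) ^ p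
        = (m : ℝ) ^ (-(alE p (l + 2))) := by
      rw [← Real.rpow_mul hm.le, ← Real.rpow_add hm]
      congr 1
      have h : alE p (l + 2) = 1 / 2 + p * alE p (l + 1) := by simp [alE]
      rw [h]
      ring
    simp only [fwd, Matrix.mulVec, dotProduct]
    rw [Finset.mul_sum]
    refine Finset.sum_congr rfl fun j _ => ?_
    rw [hWmid, fwd_scale hm hhom hW1 hB1 hWmid (l + 1) j, hhom _ hpos, ← key]
    ring

private lemma bwd_scale (hm : 0 < (m : ℝ))
    (hhom : ∀ lam : ℝ, 0 < lam → ∀ z : ℝ, σ (lam * z) = lam ^ p * σ z)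
    (hW1 : A.W1 = B.W1) (hB1 : A.B1 = B.B1)
    (hWmid : ∀ l i j, A.Wmid l i j = (m : ℝ) ^ (-(1 : ℝ) / 2) * B.Wmid l i j)
    (hWlast : A.Wlast = B.Wlast) :
    ∀ k i, bwd σ L A ξ k i = (m : ℝ) ^ (-(blE p L k)) * bwd σ L B ξ k i
  | 0, i => by simp [bwd, blE, hWlast]
  | k + 1, j => by
    have hpos : (0 : ℝ) < (m : ℝ) ^ (-(alE p (L - k))) := Real.rpow_pos_of_pos hm _
    have key : (m : ℝ) ^ (-(1 : ℝ) / 2) * ((m : ℝ) ^ (-(blE p L k)) *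
        ((m : ℝ) ^ (-(alE p (L - k)))) ^ (p - 1)) = (m : ℝ) ^ (-(blE p L (k + 1))) := by
      rw [← Real.rpow_mul hm.le, ← Real.rpow_add hm, ← Real.rpow_add hm]
      congr 1
      have h : blE p L (k + 1) = 1 / 2 + (p - 1) * alE p (L - k) + blE p L k := by simp [blE]
      rw [h]
      ring
    simp only [bwd]
    rw [Finset.mul_sum]
    refine Finset.sum_congr rfl fun i _ => ?_
    rw [hWmid, bwd_scale hm hhom hW1 hB1 hWmid hWlast k i,
      fwd_scale hm hhom hW1 hB1 hWmid (L - k) i, deriv_phom hhom hpos, ← key]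
    ring

end scale

/-- Agreement of two networks on all the weights that influence the function computed by an
`L`-hidden-layer network (and its gradients). -/
private def Agree (L : ℕ) {m d : ℕ} (A B : NetW m d) : Prop :=
  A.W1 = B.W1 ∧ A.B1 = B.B1 ∧ (∀ l, 2 ≤ l → l ≤ L → A.Wmid l = B.Wmid l) ∧ A.Wlast = B.Wlast

section agree

variable {m d L : ℕ} {σ : ℝ → ℝ} {A B : NetW m d} {ξ : Fin d → ℝ}

private lemma fwd_agree (h : Agree L A B) :
    ∀ l, l ≤ L → ∀ i, fwd σ A ξ l i = fwd σ B ξ l i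
  | 0, _, i => rfl
  | 1, _, i => by simp [fwd, h.1, h.2.1]
  | l + 2, hl, i => by
    simp only [fwd, Matrix.mulVec, dotProduct]
    refine Finset.sum_congr rfl fun j _ => ?_
    rw [h.2.2.1 (l + 2) (by omega) hl, fwd_agree h (l + 1) (by omega) j]

private lemma bwd_agree (h : Agree L A B) :
    ∀ k, k < L → ∀ i, bwd σ L A ξ k i = bwd σ L B ξ k i
  | 0, _, i => by simp [bwd, h.2.2.2]
  | k + 1, hk, j => by
    simp only [bwd]
    refine Finset.sum_congr rfl fun i _ => ?_
    rw [h.2.2.1 (L - k) (by omega) (by omega), bwd_agree h k (by omega) i,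
      fwd_agree h (L - k) (by omega) i]

private lemma dhv_agree (hL : 1 ≤ L) (h : Agree L A B) (l : ℕ) (hl1 : 1 ≤ l) (hl2 : l ≤ L)
    (i : Fin m) : dhv σ L A ξ l i = dhv σ L B ξ l i := by
  simp only [dhv]
  rw [bwd_agree h (L - l) (by omega) i, fwd_agree h l hl2 i]

private lemma outN_agree (h : Agree L A B) : outN σ L A ξ = outN σ L B ξ := by
  simp only [outN]
  refine Finset.sum_congr rfl fun i _ => ?_
  rw [h.2.2.2, fwd_agree h L le_rfl i]

private lemma sgd_agree (hL : 1 ≤ L) (loss : ℝ → ℝ → ℝ) (η : ℝ) (e : ℕ → ℝ)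
    (ξt : Fin d → ℝ) (yt : ℝ) (h : Agree L A B) :
    Agree L (sgdStep σ L loss η e ξt yt A) (sgdStep σ L loss η e ξt yt B) := by
  have hχ : deriv (loss yt) (outN σ L A ξt) = deriv (loss yt) (outN σ L B ξt) := by
    rw [outN_agree h]
  refine ⟨?_, ?_, ?_, ?_⟩
  · funext i j
    show A.W1 i j - _ = B.W1 i j - _
    rw [h.1, hχ, dhv_agree hL h 1 le_rfl hL i]
  · funext i
    show A.B1 i - _ = B.B1 i - _
    rw [h.2.1, hχ, dhv_agree hL h 1 le_rfl hL i]
  · intro l hl2 hlL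
    funext i j
    show A.Wmid l i j - _ = B.Wmid l i j - _
    rw [h.2.2.1 l hl2 hlL, hχ, dhv_agree hL h l (by omega) hlL i,
      fwd_agree h (l - 1) (by omega) j]
  · funext i
    show A.Wlast i - _ = B.Wlast i - _
    rw [h.2.2.2, hχ, fwd_agree h L le_rfl i]

end agree

set_option maxHeartbeats 1000000 in
/-- finite-width equivalence of IP-LLR and the hybrid parameterization HP.
`netIP` is the IP-LLR trajectory: integrable-parameterization initialization
(`W^l(0) = m⁻¹U^l` for `2 ≤ l ≤ L+1`), first SGD step with the large learning-rate exponents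
`c_l(0) = γ_l(p)` (layer-`l` effective update scale `m^{−(2a_l+c_l)}`, encoded by `e0`) and
later steps with `c₁ = c_{L+1} = −1`, `c_l = −2` (encoded by `elate`). `netHP` is trained
exactly as muP (`W^l(0) = m^{−1/2}U^l` for `2 ≤ l ≤ L`, `W^{L+1}(0) = m⁻¹U^{L+1}`, exponents
`2a_l + c_l` encoded by `elate`), except that at the first update the intermediate-layer
effective weights are `W^l(1) = m⁻¹U^l + ΔW^l_{muP}(1)`; HP uses base learning rate
`η_{HP}(0) = (χ₀^{IP}/χ₀^{HP}) η` at step 0 and `η` afterwards. If `χ₀^{HP} ≠ 0`, then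
`f_t^{HP}(ξ) = f_t^{IP}(ξ)` for every `t ≥ 1` and every input `ξ`. -/
theorem stmt_17 (m d L : ℕ) (hm : 0 < m) (hL : 1 ≤ L) (p : ℝ) (hp : 1 ≤ p)
    (σ : ℝ → ℝ)
    (hhom : ∀ lam : ℝ, 0 < lam → ∀ z : ℝ, σ (lam * z) = lam ^ p * σ z)
    (loss : ℝ → ℝ → ℝ) (hloss : ∀ y, Differentiable ℝ (loss y))
    (η : ℝ) (hη : 0 < η)
    (U1 : Matrix (Fin m) (Fin d) ℝ) (U : ℕ → Matrix (Fin m) (Fin m) ℝ)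
    (UL1 v1 : Fin m → ℝ)
    (ξs : ℕ → Fin d → ℝ) (ys : ℕ → ℝ)
    -- learning-rate exponents (`e l = 2 a_l + c_l`)
    (γ1 γmid : ℝ)
    (hγ1 : γ1 = -(1 / 2) * (1 + ∑ k ∈ Finset.range L, p ^ k))
    (hγmid : γmid = -1 - (1 / 2) * ∑ k ∈ Finset.range L, p ^ k)
    (e0 elate : ℕ → ℝ)
    (he0 : e0 = fun l => if l = 1 then γ1 else if l = L + 1 then 2 + γ1 else 2 + γmid)
    (helate : elate = fun l => if l = 1 then -1 else if l = L + 1 then 1 else 0)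
    -- the IP-LLR trajectory
    (netIP : ℕ → NetW m d)
    (hIP0 : netIP 0 = ⟨U1, v1, fun l => Matrix.of fun i j => (m : ℝ)⁻¹ * U l i j,
      fun i => (m : ℝ)⁻¹ * UL1 i⟩)
    (hIPstep : ∀ t, netIP (t + 1) =
      sgdStep σ L loss η (if t = 0 then e0 else elate) (ξs t) (ys t) (netIP t))
    -- the HP trajectory: muP initialization ...
    (netHP : ℕ → NetW m d)
    (hHP0 : netHP 0 = ⟨U1, v1,
      fun l => Matrix.of fun i j => (m : ℝ) ^ (-(1 : ℝ) / 2) * U l i j,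
      fun i => (m : ℝ)⁻¹ * UL1 i⟩)
    -- ... the initial loss derivatives of the two models and HP's first-step learning rate ...
    (χIP0 χHP0 : ℝ)
    (hχIP0 : χIP0 = deriv (loss (ys 0)) (outN σ L (netIP 0) (ξs 0)))
    (hχHP0 : χHP0 = deriv (loss (ys 0)) (outN σ L (netHP 0) (ξs 0)))
    (hχne : χHP0 ≠ 0)
    (ηHP0 : ℝ) (hηHP0 : ηHP0 = χIP0 / χHP0 * η)
    -- ... the first HP step: the muP step, with `W^l(1) = m⁻¹U^l + ΔW^l_{muP}(1)` at the
    -- intermediate layers ...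
    (hHP1 : netHP 1 =
      { sgdStep σ L loss ηHP0 elate (ξs 0) (ys 0) (netHP 0) with
        Wmid := fun l => Matrix.of fun i j =>
          (m : ℝ)⁻¹ * U l i j +
            ((sgdStep σ L loss ηHP0 elate (ξs 0) (ys 0) (netHP 0)).Wmid l i j -
              (m : ℝ) ^ (-(1 : ℝ) / 2) * U l i j) })
    -- ... and the subsequent muP steps with base learning rate η
    (hHPstep : ∀ t, 1 ≤ t → netHP (t + 1) =
      sgdStep σ L loss η elate (ξs t) (ys t) (netHP t)) :
    ∀ t, 1 ≤ t → ∀ ξ : Fin d → ℝ, outN σ L (netHP t) ξ = outN σ L (netIP t) ξ := by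
  have hm' : (0 : ℝ) < (m : ℝ) := by exact_mod_cast hm
  set ξ0 := ξs 0 with hξ0
  -- basic relations between the two initializations
  have hW10 : (netIP 0).W1 = (netHP 0).W1 := by rw [hIP0, hHP0]
  have hB10 : (netIP 0).B1 = (netHP 0).B1 := by rw [hIP0, hHP0]
  have hWlast0 : (netIP 0).Wlast = (netHP 0).Wlast := by rw [hIP0, hHP0]
  have hinv : (m : ℝ)⁻¹ = (m : ℝ) ^ (-(1 : ℝ) / 2) * (m : ℝ) ^ (-(1 : ℝ) / 2) := by
    rw [← Real.rpow_add hm', show (-(1 : ℝ) / 2 + -(1 : ℝ) / 2) = (-1 : ℝ) by ring]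
    simp [Real.rpow_neg hm'.le]
  have hWmid0 : ∀ l i j, (netIP 0).Wmid l i j
      = (m : ℝ) ^ (-(1 : ℝ) / 2) * (netHP 0).Wmid l i j := by
    intro l i j
    rw [hIP0, hHP0]
    show (m : ℝ)⁻¹ * U l i j = _ * ((m : ℝ) ^ (-(1 : ℝ) / 2) * U l i j)
    rw [hinv]; ring
  -- the scaling relations between the two forward/backward passes at time 0
  have hf := fwd_scale (p := p) (ξ := ξ0) hm' hhom hW10 hB10 hWmid0
  have hb := bwd_scale (L := L) (p := p) (ξ := ξ0) hm' hhom hW10 hB10 hWmid0 hWlast0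
  have hf1 : ∀ i, fwd σ (netIP 0) ξ0 1 i = fwd σ (netHP 0) ξ0 1 i := by
    intro i; simpa [alE] using hf 1 i
  have hηχ : ηHP0 * χHP0 = η * χIP0 := by
    rw [hηHP0]; field_simp
  set S := ∑ k ∈ Finset.range L, p ^ k with hS
  have hAL1 : alE p (L + 1) = 1 / 2 * S := alE_closed p L
  have hALsucc : alE p (L + 1) = 1 / 2 + p * alE p L := alE_succ p L hL
  have hA2 : alE p 2 = 1 / 2 := by norm_num [alE]
  -- the three exponent identities
  have idA : 2 + γ1 + p * alE p L = 1 := by rw [hγ1]; linarith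
  have idB : γ1 + blE p L (L - 1) = -1 := by
    rw [blE_eq p L (L - 1) 1 (by omega) le_rfl, hγ1, hA2]
    linarith
  have idC : ∀ l, 2 ≤ l → l ≤ L →
      2 + γmid + (blE p L (L - l) + ((p - 1) * alE p l + p * alE p (l - 1))) = 0 := by
    intro l hl2 hlL
    have h1 : blE p L (L - l) = alE p (L + 1) - alE p (l + 1) :=
      blE_eq p L (L - l) l (by omega) (by omega)
    have h2 : alE p (l + 1) = 1 / 2 + p * alE p l := alE_succ p l (by omega)
    have h3 : alE p l = 1 / 2 + p * alE p (l - 1) := by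
      have h := alE_succ p (l - 1) (by omega)
      rwa [show l - 1 + 1 = l by omega] at h
    rw [h1, h2, hγmid, hAL1]
    linarith [h3]
  -- values of the exponent functions
  have he01 : e0 1 = γ1 := by simp [he0]
  have he0L : e0 (L + 1) = 2 + γ1 := by
    have h1 : ¬(L + 1 = 1) := by omega
    rw [he0]; simp [h1]; omega
  have he0mid : ∀ l, 2 ≤ l → l ≤ L → e0 l = 2 + γmid := by
    intro l hl2 hlL
    have h1 : ¬(l = 1) := by omega
    have h2 : ¬(l = L + 1) := by omega
    rw [he0]; simp [h1, h2]
  have hel1 : elate 1 = -1 := by simp [helate]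
  have helL : elate (L + 1) = 1 := by
    have h1 : ¬(L + 1 = 1) := by omega
    rw [helate]; simp [h1]; intro h; exact absurd h (by omega)
  have helmid : ∀ l, 2 ≤ l → l ≤ L → elate l = 0 := by
    intro l hl2 hlL
    have h1 : ¬(l = 1) := by omega
    have h2 : ¬(l = L + 1) := by omega
    rw [helate]; simp [h1, h2]
  -- the networks agree after one step
  have hIP1 : netIP 1 = sgdStep σ L loss η e0 ξ0 (ys 0) (netIP 0) := by
    simpa using hIPstep 0
  have hdhv1 : ∀ i, dhv σ L (netIP 0) ξ0 1 i
      = (m : ℝ) ^ (-(blE p L (L - 1))) * dhv σ L (netHP 0) ξ0 1 i := by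
    intro i
    simp only [dhv]
    rw [hb (L - 1) i, hf1 i]
    ring
  have hdhvl : ∀ l i, dhv σ L (netIP 0) ξ0 l i
      = (m : ℝ) ^ (-(blE p L (L - l))) * ((m : ℝ) ^ (-(alE p l))) ^ (p - 1)
        * dhv σ L (netHP 0) ξ0 l i := by
    intro l i
    simp only [dhv]
    rw [hb (L - l) i, hf l i, deriv_phom hhom (Real.rpow_pos_of_pos hm' _)]
    ring
  have hσl : ∀ l i, σ (fwd σ (netIP 0) ξ0 l i)
      = ((m : ℝ) ^ (-(alE p l))) ^ p * σ (fwd σ (netHP 0) ξ0 l i) := by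
    intro l i
    rw [hf l i, hhom _ (Real.rpow_pos_of_pos hm' _)]
  -- coefficient identities used for the three kinds of weights
  have hc1 : η * (m : ℝ) ^ (-γ1) * χIP0 * (m : ℝ) ^ (-(blE p L (L - 1)))
      = ηHP0 * (m : ℝ) ^ (-(-1 : ℝ)) * χHP0 := by
    have hpow : (m : ℝ) ^ (-γ1) * (m : ℝ) ^ (-(blE p L (L - 1))) = (m : ℝ) ^ (-(-1 : ℝ)) := by
      rw [← Real.rpow_add hm']
      congr 1
      linarith [idB]
    calc η * (m : ℝ) ^ (-γ1) * χIP0 * (m : ℝ) ^ (-(blE p L (L - 1)))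
        = (η * χIP0) * ((m : ℝ) ^ (-γ1) * (m : ℝ) ^ (-(blE p L (L - 1)))) := by ring
      _ = (ηHP0 * χHP0) * (m : ℝ) ^ (-(-1 : ℝ)) := by rw [hpow, hηχ]
      _ = ηHP0 * (m : ℝ) ^ (-(-1 : ℝ)) * χHP0 := by ring
  have hcL : η * (m : ℝ) ^ (-(2 + γ1)) * χIP0 * ((m : ℝ) ^ (-(alE p L))) ^ p
      = ηHP0 * (m : ℝ) ^ (-(1 : ℝ)) * χHP0 := by
    have hpow : (m : ℝ) ^ (-(2 + γ1)) * ((m : ℝ) ^ (-(alE p L))) ^ p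
        = (m : ℝ) ^ (-(1 : ℝ)) := by
      rw [← Real.rpow_mul hm'.le, ← Real.rpow_add hm']
      congr 1
      linear_combination (-1 : ℝ) * idA
    calc η * (m : ℝ) ^ (-(2 + γ1)) * χIP0 * ((m : ℝ) ^ (-(alE p L))) ^ p
        = (η * χIP0) * ((m : ℝ) ^ (-(2 + γ1)) * ((m : ℝ) ^ (-(alE p L))) ^ p) := by ring
      _ = (ηHP0 * χHP0) * (m : ℝ) ^ (-(1 : ℝ)) := by rw [hpow, hηχ]
      _ = ηHP0 * (m : ℝ) ^ (-(1 : ℝ)) * χHP0 := by ring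
  have hcM : ∀ l, 2 ≤ l → l ≤ L →
      η * (m : ℝ) ^ (-(2 + γmid)) * χIP0 *
        ((m : ℝ) ^ (-(blE p L (L - l))) * ((m : ℝ) ^ (-(alE p l))) ^ (p - 1)) *
        ((m : ℝ) ^ (-(alE p (l - 1)))) ^ p
      = ηHP0 * (m : ℝ) ^ (-(0 : ℝ)) * χHP0 := by
    intro l hl2 hlL
    have hpow : (m : ℝ) ^ (-(2 + γmid)) *
        ((m : ℝ) ^ (-(blE p L (L - l))) * ((m : ℝ) ^ (-(alE p l))) ^ (p - 1)) *
        ((m : ℝ) ^ (-(alE p (l - 1)))) ^ p = (m : ℝ) ^ (-(0 : ℝ)) := by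
      rw [← Real.rpow_mul hm'.le, ← Real.rpow_mul hm'.le, ← Real.rpow_add hm',
        ← Real.rpow_add hm', ← Real.rpow_add hm']
      congr 1
      linear_combination (-1 : ℝ) * idC l hl2 hlL
    calc η * (m : ℝ) ^ (-(2 + γmid)) * χIP0 *
          ((m : ℝ) ^ (-(blE p L (L - l))) * ((m : ℝ) ^ (-(alE p l))) ^ (p - 1)) *
          ((m : ℝ) ^ (-(alE p (l - 1)))) ^ p
        = (η * χIP0) * ((m : ℝ) ^ (-(2 + γmid)) *
            ((m : ℝ) ^ (-(blE p L (L - l))) * ((m : ℝ) ^ (-(alE p l))) ^ (p - 1)) *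
            ((m : ℝ) ^ (-(alE p (l - 1)))) ^ p) := by ring
      _ = (ηHP0 * χHP0) * (m : ℝ) ^ (-(0 : ℝ)) := by rw [hpow, hηχ]
      _ = ηHP0 * (m : ℝ) ^ (-(0 : ℝ)) * χHP0 := by ring
  have hAg1 : Agree L (netHP 1) (netIP 1) := by
    refine ⟨?_, ?_, ?_, ?_⟩
    · funext i j
      rw [hHP1, hIP1]
      show (netHP 0).W1 i j - ηHP0 * (m : ℝ) ^ (-(elate 1)) *
            deriv (loss (ys 0)) (outN σ L (netHP 0) ξ0) * dhv σ L (netHP 0) ξ0 1 i * ξ0 j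
          = (netIP 0).W1 i j - η * (m : ℝ) ^ (-(e0 1)) *
            deriv (loss (ys 0)) (outN σ L (netIP 0) ξ0) * dhv σ L (netIP 0) ξ0 1 i * ξ0 j
      rw [← hχHP0, ← hχIP0, hW10, hdhv1 i, hel1, he01]
      linear_combination (dhv σ L (netHP 0) ξ0 1 i * ξ0 j) * hc1
    · funext i
      rw [hHP1, hIP1]
      show (netHP 0).B1 i - ηHP0 * (m : ℝ) ^ (-(elate 1)) *
            deriv (loss (ys 0)) (outN σ L (netHP 0) ξ0) * dhv σ L (netHP 0) ξ0 1 i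
          = (netIP 0).B1 i - η * (m : ℝ) ^ (-(e0 1)) *
            deriv (loss (ys 0)) (outN σ L (netIP 0) ξ0) * dhv σ L (netIP 0) ξ0 1 i
      rw [← hχHP0, ← hχIP0, hB10, hdhv1 i, hel1, he01]
      linear_combination (dhv σ L (netHP 0) ξ0 1 i) * hc1
    · intro l hl2 hlL
      funext i j
      rw [hHP1, hIP1]
      show (m : ℝ)⁻¹ * U l i j +
            (((netHP 0).Wmid l i j - ηHP0 * (m : ℝ) ^ (-(elate l)) *
              deriv (loss (ys 0)) (outN σ L (netHP 0) ξ0) * dhv σ L (netHP 0) ξ0 l i *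
              σ (fwd σ (netHP 0) ξ0 (l - 1) j)) - (m : ℝ) ^ (-(1 : ℝ) / 2) * U l i j)
          = (netIP 0).Wmid l i j - η * (m : ℝ) ^ (-(e0 l)) *
            deriv (loss (ys 0)) (outN σ L (netIP 0) ξ0) * dhv σ L (netIP 0) ξ0 l i *
            σ (fwd σ (netIP 0) ξ0 (l - 1) j)
      have hHPW : (netHP 0).Wmid l i j = (m : ℝ) ^ (-(1 : ℝ) / 2) * U l i j := by rw [hHP0]; rfl
      have hIPW : (netIP 0).Wmid l i j = (m : ℝ)⁻¹ * U l i j := by rw [hIP0]; rfl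
      rw [← hχHP0, ← hχIP0, hHPW, hIPW, hdhvl l i, hσl (l - 1) j,
        he0mid l hl2 hlL, helmid l hl2 hlL]
      linear_combination
        (dhv σ L (netHP 0) ξ0 l i * σ (fwd σ (netHP 0) ξ0 (l - 1) j)) * hcM l hl2 hlL
    · funext i
      rw [hHP1, hIP1]
      show (netHP 0).Wlast i - ηHP0 * (m : ℝ) ^ (-(elate (L + 1))) *
            deriv (loss (ys 0)) (outN σ L (netHP 0) ξ0) * σ (fwd σ (netHP 0) ξ0 L i)
          = (netIP 0).Wlast i - η * (m : ℝ) ^ (-(e0 (L + 1))) *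
            deriv (loss (ys 0)) (outN σ L (netIP 0) ξ0) * σ (fwd σ (netIP 0) ξ0 L i)
      rw [← hχHP0, ← hχIP0, hWlast0, hσl L i, helL, he0L]
      linear_combination (σ (fwd σ (netHP 0) ξ0 L i)) * hcL
  have hAgree : ∀ t, 1 ≤ t → Agree L (netHP t) (netIP t) := by
    intro t ht
    induction t, ht using Nat.le_induction with
    | base => exact hAg1
    | succ t ht ih =>
      rw [hHPstep t ht, hIPstep t, if_neg (by omega)]
      exact sgd_agree hL loss η elate (ξs t) (ys t) ih
  intro t ht ξ
  exact outN_agree (hAgree t ht)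
end

section
/- Consider the IP-LLR parameterization of an L-hidden-layer network with positively p-homogeneous activation σ (p ≥ 1) and no biases except at the first layer, trained by single-sample SGD on (ξ₀, y₀), (ξ₁, y₁), …. Then for every t ≥ 1 the effective weights satisfy: (i) W¹(t) = U¹ − η χ₀ dh̃¹₀ ξ₀ᵀ − η Σ_{s=1}^{t−1} χ_s dh̃¹_s ξ_sᵀ; (ii) B¹(t) = v¹ − η χ₀ dh̃¹₀ − η Σ_{s=1}^{t−1} χ_s dh̃¹_s; (iii) W^l(t) = m^{−1} U^l − η χ₀ (dh̃^l₀ (x̃^{l−1}₀)ᵀ)/m − η Σ_{s=1}^{t−1} χ_s (dh̃^l_s (x^{l−1}_s)ᵀ)/m for 2 ≤ l ≤ L; (iv) W^{L+1}(t) = U^{L+1}/m − η χ₀ x̃^L₀/m − η Σ_{s=1}^{t−1} χ_s x^L_s/m. -/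
noncomputable def Sg (p : ℝ) (n : ℕ) : ℝ := ∑ k ∈ Finset.range n, p ^ k

lemma Sg_zero (p : ℝ) : Sg p 0 = 0 := by simp [Sg]
lemma Sg_one (p : ℝ) : Sg p 1 = 1 := by simp [Sg]
lemma Sg_succ (p : ℝ) (n : ℕ) : Sg p (n + 1) = p * Sg p n + 1 := geom_sum_succ
lemma Sg_succ' (p : ℝ) (n : ℕ) : Sg p (n + 1) = Sg p n + p ^ n := Finset.sum_range_succ _ n
lemma Sg_mul (p : ℝ) (n : ℕ) : Sg p n * (p - 1) = p ^ n - 1 := geom_sum_mul p n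

lemma deriv_scale (σ : ℝ → ℝ) (hσ : Differentiable ℝ σ) (p : ℝ)
    (hhom : ∀ lam : ℝ, 0 < lam → ∀ z : ℝ, σ (lam * z) = lam ^ p * σ z)
    (lam : ℝ) (hlam : 0 < lam) (z : ℝ) :
    deriv σ (lam * z) = lam ^ (p - 1) * deriv σ z := by
  have h1 := ((hσ (lam * z)).hasDerivAt.comp z ((hasDerivAt_id z).const_mul lam))
  have h1' : HasDerivAt (fun x => lam ^ p * σ x) (deriv σ (lam * z) * (lam * 1)) z := by
    refine h1.congr_of_eventuallyEq (Filter.Eventually.of_forall fun x => ?_)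
    simp [Function.comp, hhom lam hlam x]
  have h2 : HasDerivAt (fun x => lam ^ p * σ x) (lam ^ p * deriv σ z) z :=
    (hσ z).hasDerivAt.const_mul _
  have he : deriv σ (lam * z) * (lam * 1) = lam ^ p * deriv σ z := h1'.unique h2
  have hlam0 : lam ≠ 0 := ne_of_gt hlam
  have hps : lam ^ (p - 1) = lam ^ p * lam⁻¹ := by
    rw [Real.rpow_sub hlam, Real.rpow_one, div_eq_mul_inv]
  rw [hps]
  field_simp
  linear_combination he

lemma fwd_scale_s18 {m d : ℕ} (hm : 0 < m) (σ : ℝ → ℝ) (p : ℝ)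
    (hhom : ∀ lam : ℝ, 0 < lam → ∀ z : ℝ, σ (lam * z) = lam ^ p * σ z)
    (N T : NetW m d) (ξ : Fin d → ℝ)
    (hW1 : N.W1 = T.W1) (hB1 : N.B1 = T.B1)
    (hWmid : ∀ l i j, N.Wmid l i j = (m : ℝ) ^ (-(1 : ℝ)/2) * T.Wmid l i j) :
    ∀ l, 1 ≤ l → ∀ i, fwd σ N ξ l i =
      (m : ℝ) ^ (-(1/2 * Sg p (l - 1))) * fwd σ T ξ l i := by
  have hm' : (0 : ℝ) < m := by exact_mod_cast hm
  intro l hl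
  induction l, hl using Nat.le_induction with
  | base =>
    intro i
    simp [fwd, hW1, hB1, Sg_zero]
  | succ n hn ih =>
    obtain ⟨k, rfl⟩ : ∃ k, n = k + 1 := ⟨n - 1, by omega⟩
    simp only [Nat.add_sub_cancel] at ih ⊢
    intro i
    have hout : ∀ j, σ (fwd σ N ξ (k + 1) j)
        = (m : ℝ) ^ (-(1/2 * Sg p k) * p) * σ (fwd σ T ξ (k + 1) j) := by
      intro j
      rw [ih j, hhom _ (Real.rpow_pos_of_pos hm' _), ← Real.rpow_mul (le_of_lt hm')]
    have key : (-(1 : ℝ)/2) + (-(1/2 * Sg p k) * p) = -(1/2 * Sg p (k + 1)) := by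
      have := Sg_succ p k
      linarith [Sg_succ p k]
    calc fwd σ N ξ (k + 2) i
        = ∑ j, N.Wmid (k + 2) i j * σ (fwd σ N ξ (k + 1) j) := by
          simp [fwd, Matrix.mulVec, dotProduct]
      _ = ∑ j, ((m : ℝ) ^ (-(1 : ℝ)/2) * (m : ℝ) ^ (-(1/2 * Sg p k) * p)) *
            (T.Wmid (k + 2) i j * σ (fwd σ T ξ (k + 1) j)) := by
          refine Finset.sum_congr rfl fun j _ => ?_
          rw [hWmid, hout j]; ring
      _ = (m : ℝ) ^ (-(1/2 * Sg p (k + 1))) * fwd σ T ξ (k + 2) i := by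
          rw [← Finset.mul_sum, ← Real.rpow_add hm', key]
          congr 1

lemma bwd_scale_s18 {m d : ℕ} (hm : 0 < m) (L : ℕ) (σ : ℝ → ℝ) (hσ : Differentiable ℝ σ)
    (p : ℝ)
    (hhom : ∀ lam : ℝ, 0 < lam → ∀ z : ℝ, σ (lam * z) = lam ^ p * σ z)
    (N T : NetW m d) (ξ : Fin d → ℝ)
    (hW1 : N.W1 = T.W1) (hB1 : N.B1 = T.B1)
    (hWmid : ∀ l i j, N.Wmid l i j = (m : ℝ) ^ (-(1 : ℝ)/2) * T.Wmid l i j)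
    (hWlast : ∀ i, N.Wlast i = (m : ℝ)⁻¹ * T.Wlast i) :
    ∀ k, k + 1 ≤ L → ∀ i, bwd σ L N ξ k i =
      (m : ℝ) ^ (-(1 + 1/2 * (Sg p L - Sg p (L - k)))) * bwd σ L T ξ k i := by
  have hm' : (0 : ℝ) < m := by exact_mod_cast hm
  intro k
  induction k with
  | zero =>
    intro _ i
    have : (-(1 + 1/2 * (Sg p L - Sg p (L - 0)))) = (-1 : ℝ) := by
      simp
    rw [this, Real.rpow_neg_one]
    simp [bwd, hWlast]
  | succ k ih =>
    intro hk i
    have hk' : k + 1 ≤ L := by omega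
    have hLk : L - k = (L - (k + 1)) + 1 := by omega
    have hfw := fwd_scale_s18 hm σ p hhom N T ξ hW1 hB1 hWmid (L - k) (by omega)
    have hder : ∀ i, deriv σ (fwd σ N ξ (L - k) i)
        = (m : ℝ) ^ (-(1/2 * Sg p (L - k - 1)) * (p - 1)) * deriv σ (fwd σ T ξ (L - k) i) := by
      intro i
      rw [hfw i, deriv_scale σ hσ p hhom _ (Real.rpow_pos_of_pos hm' _),
        ← Real.rpow_mul (le_of_lt hm')]
    have key : (-(1 : ℝ)/2) + (-(1 + 1/2 * (Sg p L - Sg p (L - k))))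
        + (-(1/2 * Sg p (L - k - 1)) * (p - 1))
        = -(1 + 1/2 * (Sg p L - Sg p (L - (k + 1)))) := by
      have h1 : Sg p (L - k) = Sg p (L - (k + 1)) + p ^ (L - (k + 1)) := by
        rw [hLk]; exact Sg_succ' p _
      have h2 := Sg_mul p (L - (k + 1))
      have h3 : L - k - 1 = L - (k + 1) := by omega
      rw [h3, h1]
      linarith [h2]
    calc bwd σ L N ξ (k + 1) i
        = ∑ j, N.Wmid (L - k) j i * (bwd σ L N ξ k j * deriv σ (fwd σ N ξ (L - k) j)) := by
          simp [bwd]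
      _ = ∑ j, ((m : ℝ) ^ (-(1 : ℝ)/2) * (m : ℝ) ^ (-(1 + 1/2 * (Sg p L - Sg p (L - k))))
            * (m : ℝ) ^ (-(1/2 * Sg p (L - k - 1)) * (p - 1))) *
            (T.Wmid (L - k) j i * (bwd σ L T ξ k j * deriv σ (fwd σ T ξ (L - k) j))) := by
          refine Finset.sum_congr rfl fun j _ => ?_
          rw [hWmid, ih hk' j, hder j]; ring
      _ = (m : ℝ) ^ (-(1 + 1/2 * (Sg p L - Sg p (L - (k + 1))))) * bwd σ L T ξ (k + 1) i := by
          rw [← Finset.mul_sum, ← Real.rpow_add hm', ← Real.rpow_add hm', key]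
          congr 1

lemma dhv_scale {m d : ℕ} (hm : 0 < m) (L : ℕ) (σ : ℝ → ℝ) (hσ : Differentiable ℝ σ)
    (p : ℝ)
    (hhom : ∀ lam : ℝ, 0 < lam → ∀ z : ℝ, σ (lam * z) = lam ^ p * σ z)
    (N T : NetW m d) (ξ : Fin d → ℝ)
    (hW1 : N.W1 = T.W1) (hB1 : N.B1 = T.B1)
    (hWmid : ∀ l i j, N.Wmid l i j = (m : ℝ) ^ (-(1 : ℝ)/2) * T.Wmid l i j)
    (hWlast : ∀ i, N.Wlast i = (m : ℝ)⁻¹ * T.Wlast i) :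
    ∀ l, 1 ≤ l → l ≤ L → ∀ i, dhv σ L N ξ l i =
      (m : ℝ) ^ (-(1 + 1/2 * (Sg p L - Sg p l)) + (-(1/2 * Sg p (l - 1))) * (p - 1)) *
        dhv σ L T ξ l i := by
  have hm' : (0 : ℝ) < m := by exact_mod_cast hm
  intro l hl1 hlL i
  have hb := bwd_scale_s18 hm L σ hσ p hhom N T ξ hW1 hB1 hWmid hWlast (L - l) (by omega) i
  have hll : L - (L - l) = l := by omega
  rw [hll] at hb
  have hfw := fwd_scale_s18 hm σ p hhom N T ξ hW1 hB1 hWmid l hl1 i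
  have hder : deriv σ (fwd σ N ξ l i)
      = (m : ℝ) ^ (-(1/2 * Sg p (l - 1)) * (p - 1)) * deriv σ (fwd σ T ξ l i) := by
    rw [hfw, deriv_scale σ hσ p hhom _ (Real.rpow_pos_of_pos hm' _),
      ← Real.rpow_mul (le_of_lt hm')]
  unfold dhv
  rw [hb, hder, Real.rpow_add hm']
  ring


/-- IP-LLR effective weights at time `t`.
`net` is the IP-LLR trajectory: integrable-parameterization initialization
(`W¹(0) = U¹`, `B¹(0) = v¹`, `W^l(0) = m⁻¹U^l`, `W^{L+1}(0) = m⁻¹U^{L+1}`), first SGD step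
with the large learning-rate exponents `c_l(0) = γ_l(p)` (so layer-`l` effective update scale
`m^{−(2a_l+c_l(0))}`, encoded by `e0`), and subsequent steps with `c₁ = c_{L+1} = −1`,
`c_l = −2` (encoded by `elate`). `tnet` carries the scaleless (tilde) variables at `t = 0`
(`Ŵ^l = m^{−1/2}U^l`, `dx̃^L = U^{L+1}`), and `χ s = ∂₂ℓ(y_s, f_s(ξ_s))`,
`dh̃^l_s = m · dh^l_s` for `s ≥ 1`. Then for `t ≥ 1` the effective weights are the stated
explicit sums. -/
theorem stmt_18 (m d L : ℕ) (hm : 0 < m) (hL : 1 ≤ L) (p : ℝ) (hp : 1 ≤ p)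
    (σ : ℝ → ℝ) (hσdiff : Differentiable ℝ σ)
    (hhom : ∀ lam : ℝ, 0 < lam → ∀ z : ℝ, σ (lam * z) = lam ^ p * σ z)
    (loss : ℝ → ℝ → ℝ) (hloss : ∀ y, Differentiable ℝ (loss y))
    (η : ℝ) (hη : 0 < η)
    (U1 : Matrix (Fin m) (Fin d) ℝ) (U : ℕ → Matrix (Fin m) (Fin m) ℝ)
    (UL1 v1 : Fin m → ℝ)
    (ξs : ℕ → Fin d → ℝ) (ys : ℕ → ℝ)
    -- the IP-LLR learning-rate exponents (`e l = 2 a_l + c_l`)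
    (γ1 γmid : ℝ)
    (hγ1 : γ1 = -(1 / 2) * (1 + ∑ k ∈ Finset.range L, p ^ k))
    (hγmid : γmid = -1 - (1 / 2) * ∑ k ∈ Finset.range L, p ^ k)
    (e0 elate : ℕ → ℝ)
    (he0 : e0 = fun l => if l = 1 then γ1 else if l = L + 1 then 2 + γ1 else 2 + γmid)
    (helate : elate = fun l => if l = 1 then -1 else if l = L + 1 then 1 else 0)
    -- the IP-LLR training trajectory
    (net : ℕ → NetW m d)
    (hnet0 : net 0 = ⟨U1, v1, fun l => Matrix.of fun i j => (m : ℝ)⁻¹ * U l i j,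
      fun i => (m : ℝ)⁻¹ * UL1 i⟩)
    (hnetstep : ∀ t, net (t + 1) =
      sgdStep σ L loss η (if t = 0 then e0 else elate) (ξs t) (ys t) (net t))
    -- the network carrying the scaleless (tilde) variables at time 0
    (tnet : NetW m d)
    (htnet : tnet = ⟨U1, v1, fun l => Matrix.of fun i j => (m : ℝ) ^ (-(1 : ℝ) / 2) * U l i j,
      UL1⟩)
    (χ : ℕ → ℝ) (hχ : ∀ s, χ s = deriv (loss (ys s)) (outN σ L (net s) (ξs s))) :
    ∀ t, 1 ≤ t →
      (∀ i j, (net t).W1 i j =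
          U1 i j - η * χ 0 * dhv σ L tnet (ξs 0) 1 i * ξs 0 j -
            η * ∑ s ∈ Finset.Ico 1 t, χ s * ((m : ℝ) * dhv σ L (net s) (ξs s) 1 i) * ξs s j) ∧
      (∀ i, (net t).B1 i =
          v1 i - η * χ 0 * dhv σ L tnet (ξs 0) 1 i -
            η * ∑ s ∈ Finset.Ico 1 t, χ s * ((m : ℝ) * dhv σ L (net s) (ξs s) 1 i)) ∧
      (∀ l, 2 ≤ l → l ≤ L → ∀ i j, (net t).Wmid l i j =
          (m : ℝ)⁻¹ * U l i j -
            η * χ 0 * (dhv σ L tnet (ξs 0) l i * σ (fwd σ tnet (ξs 0) (l - 1) j)) / m -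
            η * ∑ s ∈ Finset.Ico 1 t, χ s * (((m : ℝ) * dhv σ L (net s) (ξs s) l i) *
              σ (fwd σ (net s) (ξs s) (l - 1) j)) / m) ∧
      ∀ i, (net t).Wlast i =
          UL1 i / m - η * χ 0 * σ (fwd σ tnet (ξs 0) L i) / m -
            η * ∑ s ∈ Finset.Ico 1 t, χ s * σ (fwd σ (net s) (ξs s) L i) / m := by
  have hm' : (0 : ℝ) < (m : ℝ) := by exact_mod_cast hm
  have hm0 : (m : ℝ) ≠ 0 := ne_of_gt hm'
  have hg1 : γ1 = -(1 / 2) * (1 + Sg p L) := by rw [hγ1]; rfl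
  have hgm : γmid = -1 - (1 / 2) * Sg p L := by rw [hγmid]; rfl
  -- relations between `net 0` and `tnet`
  have hn0W1 : (net 0).W1 = U1 := by rw [hnet0]
  have hn0B1 : (net 0).B1 = v1 := by rw [hnet0]
  have hn0Wmid : ∀ l i j, (net 0).Wmid l i j = (m : ℝ)⁻¹ * U l i j := by
    intro l i j; rw [hnet0]; rfl
  have hn0Wlast : ∀ i, (net 0).Wlast i = (m : ℝ)⁻¹ * UL1 i := by
    intro i; rw [hnet0]
  have hW1 : (net 0).W1 = tnet.W1 := by rw [hnet0, htnet]
  have hB1 : (net 0).B1 = tnet.B1 := by rw [hnet0, htnet]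
  have hWmid : ∀ l i j, (net 0).Wmid l i j = (m : ℝ) ^ (-(1 : ℝ)/2) * tnet.Wmid l i j := by
    intro l i j
    rw [hnet0, htnet]
    show (m : ℝ)⁻¹ * U l i j
        = (m : ℝ) ^ (-(1 : ℝ)/2) * ((m : ℝ) ^ (-(1 : ℝ)/2) * U l i j)
    rw [← mul_assoc, ← Real.rpow_add hm']
    norm_num [Real.rpow_neg_one]
  have hWlast : ∀ i, (net 0).Wlast i = (m : ℝ)⁻¹ * tnet.Wlast i := by
    intro i; rw [hnet0, htnet]
  have he01 : e0 1 = γ1 := by simp [he0]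
  have he0last : e0 (L + 1) = 2 + γ1 := by
    simp [he0, show L + 1 ≠ 1 by omega, show L ≠ 0 by omega]
  have hdhv := dhv_scale hm L σ hσdiff p hhom (net 0) tnet (ξs 0) hW1 hB1 hWmid hWlast
  have hfw := fwd_scale_s18 hm σ p hhom (net 0) tnet (ξs 0) hW1 hB1 hWmid
  -- key cancellation for layer 1
  have key1 : ∀ i, (m : ℝ) ^ (-(e0 1)) * dhv σ L (net 0) (ξs 0) 1 i
      = dhv σ L tnet (ξs 0) 1 i := by
    intro i
    have hd := hdhv 1 le_rfl hL i
    simp only [show (1 : ℕ) - 1 = 0 from rfl, Sg_zero, Sg_one] at hd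
    rw [hd, ← mul_assoc, ← Real.rpow_add hm']
    have hE : -(e0 1) + (-(1 + 1/2 * (Sg p L - 1)) + -(1/2 * (0:ℝ)) * (p - 1)) = 0 := by
      rw [he01, hg1]; ring
    rw [hE, Real.rpow_zero, one_mul]
  -- key cancellation for middle layers
  have keyMid : ∀ l, 2 ≤ l → l ≤ L → ∀ i j,
      (m : ℝ) ^ (-(e0 l)) * (dhv σ L (net 0) (ξs 0) l i * σ (fwd σ (net 0) (ξs 0) (l - 1) j))
        = (m : ℝ)⁻¹ * (dhv σ L tnet (ξs 0) l i * σ (fwd σ tnet (ξs 0) (l - 1) j)) := by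
    intro l hl2 hlL i j
    obtain ⟨k, rfl⟩ : ∃ k, l = k + 2 := ⟨l - 2, by omega⟩
    simp only [show k + 2 - 1 = k + 1 from rfl]
    have hσf : σ (fwd σ (net 0) (ξs 0) (k + 1) j)
        = (m : ℝ) ^ (-(1/2 * Sg p k) * p) * σ (fwd σ tnet (ξs 0) (k + 1) j) := by
      have h := hfw (k + 1) (by omega) j
      simp only [show k + 1 - 1 = k from rfl] at h
      rw [h, hhom _ (Real.rpow_pos_of_pos hm' _), ← Real.rpow_mul (le_of_lt hm')]
    have hdh := hdhv (k + 2) (by omega) hlL i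
    simp only [show k + 2 - 1 = k + 1 from rfl] at hdh
    rw [hdh, hσf]
    rw [show ∀ a b c x y : ℝ, a * (b * x * (c * y)) = (a * b * c) * (x * y) from
      fun a b c x y => by ring]
    rw [← Real.rpow_add hm', ← Real.rpow_add hm']
    have h1 : Sg p (k + 2) = Sg p (k + 1) + p ^ (k + 1) := Sg_succ' p (k + 1)
    have hmul := Sg_mul p (k + 1)
    have hsucc := Sg_succ p k
    have he0m : e0 (k + 2) = 2 + γmid := by
      simp [he0, show k + 2 ≠ 1 by omega, show k + 2 ≠ L + 1 by omega]
    have hE : -(e0 (k + 2)) + (-(1 + 1/2 * (Sg p L - Sg p (k + 2)))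
          + -(1/2 * Sg p (k + 1)) * (p - 1)) + -(1/2 * Sg p k) * p = -1 := by
      rw [he0m, hgm]
      linear_combination (1/2) * h1 - (1/2) * hmul + (1/2) * hsucc
    rw [hE, Real.rpow_neg_one]
  -- key cancellation for the last layer
  have keyLast : ∀ i, (m : ℝ) ^ (-(e0 (L + 1))) * σ (fwd σ (net 0) (ξs 0) L i)
      = (m : ℝ)⁻¹ * σ (fwd σ tnet (ξs 0) L i) := by
    intro i
    have h := hfw L hL i
    rw [h, hhom _ (Real.rpow_pos_of_pos hm' _), ← Real.rpow_mul (le_of_lt hm'),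
      ← mul_assoc, ← Real.rpow_add hm']
    have hsL : Sg p L = p * Sg p (L - 1) + 1 := by
      have h' := Sg_succ p (L - 1)
      rwa [show L - 1 + 1 = L from by omega] at h'
    have hE : -(e0 (L + 1)) + -(1/2 * Sg p (L - 1)) * p = -1 := by
      rw [he0last, hg1]
      linear_combination (1/2) * hsL
    rw [hE, Real.rpow_neg_one]
  intro t ht
  induction t, ht using Nat.le_induction with
  | base =>
    have hstep := hnetstep 0
    rw [if_pos rfl] at hstep
    refine ⟨fun i j => ?_, fun i => ?_, fun l hl2 hlL i j => ?_, fun i => ?_⟩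
    · have h1 : (net 1).W1 i j = (net 0).W1 i j
          - η * (m : ℝ) ^ (-(e0 1)) * χ 0 * dhv σ L (net 0) (ξs 0) 1 i * ξs 0 j := by
        rw [hstep, hχ 0]; rfl
      rw [h1, hn0W1, Finset.Ico_self, Finset.sum_empty]
      linear_combination (-(η * χ 0 * ξs 0 j)) * key1 i
    · have h1 : (net 1).B1 i = (net 0).B1 i
          - η * (m : ℝ) ^ (-(e0 1)) * χ 0 * dhv σ L (net 0) (ξs 0) 1 i := by
        rw [hstep, hχ 0]; rfl
      rw [h1, hn0B1, Finset.Ico_self, Finset.sum_empty]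
      linear_combination (-(η * χ 0)) * key1 i
    · have h1 : (net 1).Wmid l i j = (net 0).Wmid l i j
          - η * (m : ℝ) ^ (-(e0 l)) * χ 0 * dhv σ L (net 0) (ξs 0) l i *
            σ (fwd σ (net 0) (ξs 0) (l - 1) j) := by
        rw [hstep, hχ 0]; rfl
      rw [h1, hn0Wmid, Finset.Ico_self, Finset.sum_empty]
      linear_combination (-(η * χ 0)) * keyMid l hl2 hlL i j
    · have h1 : (net 1).Wlast i = (net 0).Wlast i
          - η * (m : ℝ) ^ (-(e0 (L + 1))) * χ 0 * σ (fwd σ (net 0) (ξs 0) L i) := by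
        rw [hstep, hχ 0]; rfl
      rw [h1, hn0Wlast, Finset.Ico_self, Finset.sum_empty]
      linear_combination (-(η * χ 0)) * keyLast i
  | succ n hn ih =>
    have hstep := hnetstep n
    rw [if_neg (by omega)] at hstep
    have hel1 : (m : ℝ) ^ (-(elate 1)) = (m : ℝ) := by
      rw [helate]; norm_num
    have helmid : ∀ l, 2 ≤ l → l ≤ L → (m : ℝ) ^ (-(elate l)) = 1 := by
      intro l h2 hL'
      rw [helate]
      simp [show l ≠ 1 by omega, show l ≠ L + 1 by omega]
    have hellast : (m : ℝ) ^ (-(elate (L + 1))) = (m : ℝ)⁻¹ := by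
      rw [helate]
      simp [show L + 1 ≠ 1 by omega, show L ≠ 0 by omega, Real.rpow_neg_one]
    refine ⟨fun i j => ?_, fun i => ?_, fun l hl2 hlL i j => ?_, fun i => ?_⟩
    · have h1 : (net (n + 1)).W1 i j = (net n).W1 i j
          - η * (m : ℝ) ^ (-(elate 1)) * χ n * dhv σ L (net n) (ξs n) 1 i * ξs n j := by
        rw [hstep, hχ n]; rfl
      rw [h1, hel1, ih.1 i j, Finset.sum_Ico_succ_top hn]
      ring
    · have h1 : (net (n + 1)).B1 i = (net n).B1 i
          - η * (m : ℝ) ^ (-(elate 1)) * χ n * dhv σ L (net n) (ξs n) 1 i := by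
        rw [hstep, hχ n]; rfl
      rw [h1, hel1, ih.2.1 i, Finset.sum_Ico_succ_top hn]
      ring
    · have h1 : (net (n + 1)).Wmid l i j = (net n).Wmid l i j
          - η * (m : ℝ) ^ (-(elate l)) * χ n * dhv σ L (net n) (ξs n) l i *
            σ (fwd σ (net n) (ξs n) (l - 1) j) := by
        rw [hstep, hχ n]; rfl
      rw [h1, helmid l hl2 hlL, ih.2.2.1 l hl2 hlL i j, Finset.sum_Ico_succ_top hn]
      field_simp
      ring
    · have h1 : (net (n + 1)).Wlast i = (net n).Wlast i
          - η * (m : ℝ) ^ (-(elate (L + 1))) * χ n * σ (fwd σ (net n) (ξs n) L i) := by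
        rw [hstep, hχ n]; rfl
      rw [h1, hellast, ih.2.2.2 i, Finset.sum_Ico_succ_top hn]
      ring
end
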